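/- arXiv:1605.08180 — 7 statements merged into one kernel-verified Lean document; each statement's English description precedes it below -/
import Mathlib

section
/- A strongly connected directed signed graph that is structurally unbalanced contains a directed cycle with an odd number of negative edges (a negative cycle). -/
/-!
Fix a root `v₀`. If there is no negative cycle, all walks from `v₀` to a vertex `i` have the same
sign: two walks of different signs, followed by a walk back from `i` to `v₀` (strong connectivity),
would give closed walks at `v₀` of different signs, one of them negative. Colouring each vertex by
this sign is a structural balance, since appending a positive (negative) edge keeps (flips) it.
-/

def StronglyConnected {α : Type*} (adj : α → α → Prop) : Prop :=
  ∀ a b, Relation.ReflTransGen adj a b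

def StructurallyBalanced {V : Type*} (Ep En : V → V → Prop) : Prop :=
  ∃ f : V → Bool, (∀ i j, Ep i j → f i = f j) ∧ (∀ i j, En i j → f i ≠ f j)

/-- `SignedWalk Ep En i j s` : directed walk from `i` to `j` of sign `s`
(`false` = odd number of negative edges). -/
inductive SignedWalk {V : Type*} (Ep En : V → V → Prop) : V → V → Bool → Prop
  | refl (i : V) : SignedWalk Ep En i i true
  | pos {i j k : V} {s : Bool} : Ep i j → SignedWalk Ep En j k s →
      SignedWalk Ep En i k s
  | neg {i j k : V} {s : Bool} : En i j → SignedWalk Ep En j k s →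
      SignedWalk Ep En i k (!s)

namespace SignedWalk

variable {V : Type*} {Ep En : V → V → Prop}

lemma append {i j k : V} {s t : Bool} (h₁ : SignedWalk Ep En i j s)
    (h₂ : SignedWalk Ep En j k t) : SignedWalk Ep En i k (s == t) := by
  induction h₁ with
  | refl => simpa using h₂
  | pos e _ ih => exact .pos e (ih h₂)
  | @neg _ _ _ s e _ ih => cases s <;> cases t <;> exact .neg e (ih h₂)

lemma concat_pos {i j k : V} {s : Bool} (h : SignedWalk Ep En i j s) (e : Ep j k) :
    SignedWalk Ep En i k s := by
  simpa using h.append (.pos e (.refl k))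

lemma concat_neg {i j k : V} {s : Bool} (h : SignedWalk Ep En i j s) (e : En j k) :
    SignedWalk Ep En i k (!s) := by
  simpa using h.append (.neg e (.refl k))

lemma exists_of_reflTransGen {i j : V}
    (h : Relation.ReflTransGen (fun i j => Ep i j ∨ En i j) i j) :
    ∃ s, SignedWalk Ep En i j s := by
  induction h with
  | refl => exact ⟨true, .refl i⟩
  | tail _ e ih =>
    obtain ⟨s, hs⟩ := ih
    rcases e with ep | en
    · exact ⟨s, hs.concat_pos ep⟩
    · exact ⟨!s, hs.concat_neg en⟩

lemma sign_eq_of_not_negCycle {v i : V} {s s' t : Bool}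
    (hcyc : ¬ SignedWalk Ep En v v false) (h₁ : SignedWalk Ep En v i s)
    (h₂ : SignedWalk Ep En v i s') (hback : SignedWalk Ep En i v t) : s = s' := by
  have cycle_pos : ∀ {u : Bool}, SignedWalk Ep En v v u → u = true := fun {u} h => by
    cases u
    · exact absurd h hcyc
    · rfl
  have hs := cycle_pos (h₁.append hback)
  have hs' := cycle_pos (h₂.append hback)
  simp only [beq_iff_eq] at hs hs'
  rw [hs, hs']

end SignedWalk

theorem structurallyBalanced_of_forall_not_negCycle {V : Type*} {Ep En : V → V → Prop}
    (hSC : StronglyConnected (fun i j => Ep i j ∨ En i j))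
    (hcyc : ∀ v, ¬ SignedWalk Ep En v v false) : StructurallyBalanced Ep En := by
  rcases isEmpty_or_nonempty V with _ | ⟨⟨v₀⟩⟩
  · exact ⟨isEmptyElim, isEmptyElim, isEmptyElim⟩
  · choose f hf using fun i => SignedWalk.exists_of_reflTransGen (hSC v₀ i)
    have sign_eq : ∀ {i s}, SignedWalk Ep En v₀ i s → s = f i := by
      intro i s h
      obtain ⟨_, hback⟩ := SignedWalk.exists_of_reflTransGen (hSC i v₀)
      exact SignedWalk.sign_eq_of_not_negCycle (hcyc v₀) h (hf i) hback
    refine ⟨f, fun i j e => sign_eq ((hf i).concat_pos e), fun i j e => ?_⟩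
    rw [← sign_eq ((hf i).concat_neg e)]
    exact (Bool.not_ne_self (f i)).symm

/-- A strongly connected, structurally unbalanced signed digraph contains a
negative cycle (a closed directed walk with an odd number of negative edges). -/
theorem stmt3 {V : Type*} (Ep En : V → V → Prop)
    (hSC : StronglyConnected (fun i j => Ep i j ∨ En i j))
    (hUnbal : ¬ StructurallyBalanced Ep En) :
    ∃ v : V, SignedWalk Ep En v v false := by
  by_contra hcyc
  exact hUnbal (structurallyBalanced_of_forall_not_negCycle hSC fun v h => hcyc ⟨v, h⟩)
end

section
/- Let P be an N×N real matrix such that |P| (the entrywise absolute value of P) is row-stochastic, P has positive diagonal entries, and the signed graph G(P) (with an edge (v_j,v_i) of sign sgn(p_ij) whenever p_ij ≠ 0, i≠j) is strongly connected and structurally balanced with at least one negative edge, with balanced bipartition V₁ = {v₁,...,v_m}, V₂ = {v_{m+1},...,v_N}. Let D = diag(d₁,...,d_N) with dᵢ = 1 for i ≤ m and dᵢ = −1 for i > m. Then DPD is a nonnegative row-stochastic matrix, and for every initial condition x(0), the solution of x(t+1) = P x(t) satisfies: x_i(t) converges to c·dᵢ for all i, where c = ξᵀ D x(0) and ξ is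 the normalized left Perron eigenvector of DPD. -/
/-!
Conjugation by the gauge `D = diag(d)` turns the structurally balanced matrix `P` into
`DPD = |P|`, which is row-stochastic, and primitive because its graph is strongly connected and its
diagonal is positive. For a stochastic `Q` the spread `max v - min v` never grows under `v ↦ Q v`,
and if every entry of `Q ^ k` is at least `ε > 0` then `Q ^ k` shrinks it by the factor `1 - ε`.
Hence `Q ^ t v` reaches consensus, the columns of `Q ^ t` converge to the entries of a stationary
probability vector `ξ`, and `P ^ t = D Q ^ t D` gives `x_i(t) → d_i ξᵀ D x(0)`.
-/

open Matrix Filter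

open Finset Topology

lemma StronglyConnected.mono {α : Type*} {r s : α → α → Prop} (hrs : r ≤ s)
    (h : StronglyConnected r) : StronglyConnected s :=
  fun a b => Relation.ReflTransGen.mono hrs a b (h a b)

/-- The paper's gauge vector `d` of the bipartition `{p, ¬ p}`. -/
def signVec {ι R : Type*} [One R] [Neg R] (p : ι → Prop) [DecidablePred p] : ι → R :=
  fun i => if p i then 1 else -1

noncomputable def spread {ι : Type*} (v : ι → ℝ) : ℝ :=
  (⨆ i, v i) - ⨅ i, v i

lemma signVec_mul_signVec {ι R : Type*} [Ring R] (p : ι → Prop) [DecidablePred p] (i j : ι) :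
    signVec p i * signVec p j = if (p i ↔ p j) then (1 : R) else -1 := by
  unfold signVec
  by_cases hi : p i <;> by_cases hj : p j <;> simp [hi, hj]

namespace Matrix

lemma exists_pos_le_apply_of_pos {ι R : Type*} [Finite ι] [Nonempty ι] [LinearOrder R] [Zero R]
    {A : Matrix ι ι R} (hA : ∀ i j, 0 < A i j) : ∃ ε > 0, ∀ i j, ε ≤ A i j := by
  obtain ⟨p, hp⟩ := Finite.exists_min fun p : ι × ι => A p.1 p.2
  exact ⟨A p.1 p.2, hA p.1 p.2, fun i j => hp (i, j)⟩

variable {ι : Type*} [Fintype ι] [DecidableEq ι]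

section Primitive

variable {R : Type*} [Ring R] [LinearOrder R] [IsStrictOrderedRing R] {A : Matrix ι ι R}

lemma pow_succ_apply_pos (hA : ∀ i j, 0 ≤ A i j) {t : ℕ} {i k j : ι} (hik : 0 < A i k)
    (hkj : 0 < (A ^ t) k j) : 0 < (A ^ (t + 1)) i j := by
  rw [pow_succ', mul_apply]
  exact sum_pos' (fun l _ => mul_nonneg (hA i l) (pow_apply_nonneg hA t l j))
    ⟨k, mem_univ k, mul_pos hik hkj⟩

lemma pow_apply_pos_of_le (hA : ∀ i j, 0 ≤ A i j) (hdiag : ∀ i, 0 < A i i) {i j : ι}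
    {s t : ℕ} (hst : s ≤ t) (hs : 0 < (A ^ s) i j) : 0 < (A ^ t) i j := by
  induction t, hst using Nat.le_induction with
  | base => exact hs
  | succ t _ ih => exact pow_succ_apply_pos hA (hdiag i) ih

lemma exists_pow_apply_pos_of_reflTransGen (hA : ∀ i j, 0 ≤ A i j) {i j : ι}
    (h : Relation.ReflTransGen (fun j i => 0 < A i j) j i) : ∃ t, 0 < (A ^ t) i j := by
  induction h with
  | refl => exact ⟨0, by simp⟩
  | tail _ hlast ih =>
    obtain ⟨t, ht⟩ := ih
    exact ⟨t + 1, pow_succ_apply_pos hA hlast ht⟩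

/-- Positive diagonal entries let a path of length `t` be padded to any length `≥ t`. -/
theorem isPrimitive_of_stronglyConnected (hA : ∀ i j, 0 ≤ A i j) (hdiag : ∀ i, 0 < A i i)
    (hSC : StronglyConnected fun j i => 0 < A i j) : A.IsPrimitive := by
  choose t ht using fun p : ι × ι =>
    exists_pow_apply_pos_of_reflTransGen (i := p.1) (j := p.2) hA (hSC p.2 p.1)
  refine ⟨hA, univ.sup t + 1, Nat.succ_pos _, fun i j => ?_⟩
  exact pow_apply_pos_of_le hA hdiag (Nat.le_succ_of_le (le_sup (mem_univ (i, j)))) (ht (i, j))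

end Primitive

lemma pow_mulVec_eq_of_mul_self_eq_one {R : Type*} [Semiring R] {D : Matrix ι ι R}
    (hD : D * D = 1) (A : Matrix ι ι R) (t : ℕ) (x : ι → R) :
    A ^ t *ᵥ x = D *ᵥ ((D * A * D) ^ t *ᵥ (D *ᵥ x)) := by
  have hconj : (D * A * D) ^ t = D * A ^ t * D := Units.conj_pow ⟨D, D, hD, hD⟩ A t
  rw [hconj, mulVec_mulVec, mulVec_mulVec, ← Matrix.mul_assoc, ← Matrix.mul_assoc, hD,
    Matrix.one_mul, Matrix.mul_assoc, hD, Matrix.mul_one]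

section Gauge

variable {R : Type*} [Ring R] (p : ι → Prop) [DecidablePred p]

lemma diagonal_signVec_mul_self :
    diagonal (signVec p) * diagonal (signVec p) = (1 : Matrix ι ι R) := by
  rw [diagonal_mul_diagonal, ← diagonal_one]
  congr 1
  funext i
  rw [signVec_mul_signVec, if_pos Iff.rfl]

theorem diagonal_signVec_mul_mul_diagonal_signVec {R : Type*} [CommRing R] [LinearOrder R]
    [IsStrictOrderedRing R] {P : Matrix ι ι R} (hdiag : ∀ i, 0 < P i i)
    (hbal : ∀ i j, i ≠ j → P i j ≠ 0 → ((p i ↔ p j) ↔ 0 < P i j)) :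
    diagonal (signVec p) * P * diagonal (signVec p) = P.map abs := by
  ext i j
  rw [mul_diagonal, diagonal_mul, map_apply,
    show signVec p i * P i j * signVec p j = signVec p i * signVec p j * P i j by ring,
    signVec_mul_signVec]
  rcases eq_or_ne i j with rfl | hij
  · rw [if_pos Iff.rfl, one_mul, abs_of_pos (hdiag i)]
  rcases eq_or_ne (P i j) 0 with h0 | h0
  · simp [h0]
  by_cases hp : p i ↔ p j
  · rw [if_pos hp, one_mul, abs_of_pos ((hbal i j hij h0).1 hp)]
  · have hneg : P i j < 0 := lt_of_le_of_ne (not_lt.1 (mt (hbal i j hij h0).2 hp)) h0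
    rw [if_neg hp, neg_one_mul, abs_of_neg hneg]

end Gauge

section Consensus

variable {Q : Matrix ι ι ℝ}

lemma mulVec_apply_le_iSup (hQ : Q ∈ rowStochastic ℝ ι) (v : ι → ℝ) (i : ι) :
    (Q *ᵥ v) i ≤ ⨆ j, v j :=
  calc (Q *ᵥ v) i = ∑ j, Q i j * v j := rfl
    _ ≤ ∑ j, Q i j * ⨆ k, v k := by
      gcongr with j
      · exact hQ.1 i j
      · exact le_ciSup (Finite.bddAbove_range v) j
    _ = ⨆ k, v k := by rw [← sum_mul, sum_row_of_mem_rowStochastic hQ, one_mul]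

lemma iInf_le_mulVec_apply (hQ : Q ∈ rowStochastic ℝ ι) (v : ι → ℝ) (i : ι) :
    ⨅ j, v j ≤ (Q *ᵥ v) i :=
  calc ⨅ k, v k = ∑ j, Q i j * ⨅ k, v k := by
        rw [← sum_mul, sum_row_of_mem_rowStochastic hQ, one_mul]
    _ ≤ ∑ j, Q i j * v j := by
      gcongr with j
      · exact hQ.1 i j
      · exact ciInf_le (Finite.bddBelow_range v) j
    _ = (Q *ᵥ v) i := rfl

variable [Nonempty ι]

/-- The weight `≥ ε` that each row of `Q` puts on a minimal coordinate of `v` is what pulls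
`Q *ᵥ v` below the maximum. -/
lemma mulVec_apply_le_iSup_sub (hQ : Q ∈ rowStochastic ℝ ι) {ε : ℝ} (hε : ∀ i j, ε ≤ Q i j)
    (v : ι → ℝ) (i : ι) : (Q *ᵥ v) i ≤ (⨆ j, v j) - ε * spread v := by
  obtain ⟨j₀, hj₀⟩ := exists_eq_ciInf_of_finite (f := v)
  have hgap : ∀ j, 0 ≤ Q i j * ((⨆ k, v k) - v j) := fun j =>
    mul_nonneg (hQ.1 i j) (sub_nonneg.2 (le_ciSup (Finite.bddAbove_range v) j))
  have hspread : 0 ≤ spread v :=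
    sub_nonneg.2 (ciInf_le_ciSup (Finite.bddBelow_range v) (Finite.bddAbove_range v))
  calc (Q *ᵥ v) i = (⨆ k, v k) - ∑ j, Q i j * ((⨆ k, v k) - v j) := by
        simp only [mul_sub, sum_sub_distrib, ← sum_mul, sum_row_of_mem_rowStochastic hQ, one_mul,
          sub_sub_cancel]
        rfl
    _ ≤ (⨆ k, v k) - Q i j₀ * ((⨆ k, v k) - v j₀) := by
      gcongr
      exact single_le_sum (fun j _ => hgap j) (mem_univ j₀)
    _ ≤ (⨆ k, v k) - ε * spread v := by
      rw [hj₀]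
      exact sub_le_sub_left (mul_le_mul_of_nonneg_right (hε i j₀) hspread) _

lemma spread_mulVec_le (hQ : Q ∈ rowStochastic ℝ ι) {ε : ℝ} (hε : ∀ i j, ε ≤ Q i j)
    (v : ι → ℝ) : spread (Q *ᵥ v) ≤ (1 - ε) * spread v := by
  have hsup : ⨆ i, (Q *ᵥ v) i ≤ (⨆ j, v j) - ε * spread v :=
    ciSup_le (mulVec_apply_le_iSup_sub hQ hε v)
  have hinf : ⨅ j, v j ≤ ⨅ i, (Q *ᵥ v) i := le_ciInf (iInf_le_mulVec_apply hQ v)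
  unfold spread at *
  linarith

lemma spread_pow_mulVec_le (hQ : Q ∈ rowStochastic ℝ ι) {ε : ℝ} (hε : ∀ i j, ε ≤ Q i j)
    (hε₁ : ε ≤ 1) (v : ι → ℝ) (s : ℕ) : spread (Q ^ s *ᵥ v) ≤ (1 - ε) ^ s * spread v := by
  induction s with
  | zero => simp
  | succ s ih =>
    calc spread (Q ^ (s + 1) *ᵥ v) = spread (Q *ᵥ (Q ^ s *ᵥ v)) := by
          rw [pow_succ', mulVec_mulVec]
      _ ≤ (1 - ε) * spread (Q ^ s *ᵥ v) := spread_mulVec_le hQ hε _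
      _ ≤ (1 - ε) * ((1 - ε) ^ s * spread v) := by gcongr
      _ = (1 - ε) ^ (s + 1) * spread v := by ring

lemma iInf_pow_mulVec_monotone (hQ : Q ∈ rowStochastic ℝ ι) (v : ι → ℝ) :
    Monotone fun t => ⨅ i, (Q ^ t *ᵥ v) i :=
  monotone_nat_of_le_succ fun t => by
    rw [pow_succ', ← mulVec_mulVec]
    exact le_ciInf (iInf_le_mulVec_apply hQ _)

lemma iSup_pow_mulVec_antitone (hQ : Q ∈ rowStochastic ℝ ι) (v : ι → ℝ) :
    Antitone fun t => ⨆ i, (Q ^ t *ᵥ v) i :=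
  antitone_nat_of_succ_le fun t => by
    rw [pow_succ', ← mulVec_mulVec]
    exact ciSup_le (mulVec_apply_le_iSup hQ _)

/-- Along multiples of the primitivity exponent `k` the spread contracts geometrically,
and in between it cannot grow. -/
lemma tendsto_spread_pow_mulVec (hQ : Q ∈ rowStochastic ℝ ι) (hprim : Q.IsPrimitive)
    (v : ι → ℝ) : Tendsto (fun t => spread (Q ^ t *ᵥ v)) atTop (𝓝 0) := by
  obtain ⟨-, k, hk, hpos⟩ := hprim
  obtain ⟨ε, hε, hεle⟩ := exists_pos_le_apply_of_pos hpos
  have hε₁ : ε ≤ 1 := (hεle (Classical.arbitrary ι) (Classical.arbitrary ι)).trans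
    (le_one_of_mem_rowStochastic (pow_mem hQ k))
  have hanti : Antitone fun t => spread (Q ^ t *ᵥ v) := fun s t hst =>
    sub_le_sub (iSup_pow_mulVec_antitone hQ v hst) (iInf_pow_mulVec_monotone hQ v hst)
  have hbound : ∀ t, spread (Q ^ t *ᵥ v) ≤ (1 - ε) ^ (t / k) * spread v := fun t =>
    calc spread (Q ^ t *ᵥ v) ≤ spread (Q ^ (k * (t / k)) *ᵥ v) := hanti (Nat.mul_div_le t k)
      _ = spread ((Q ^ k) ^ (t / k) *ᵥ v) := by rw [pow_mul]
      _ ≤ (1 - ε) ^ (t / k) * spread v := spread_pow_mulVec_le (pow_mem hQ k) hεle hε₁ v _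
  have hgeom : Tendsto (fun t => (1 - ε) ^ (t / k) * spread v) atTop (𝓝 0) := by
    simpa using ((tendsto_pow_atTop_nhds_zero_of_lt_one (by linarith) (by linarith)).comp
      (Nat.tendsto_div_const_atTop hk.ne')).mul_const (spread v)
  exact squeeze_zero (fun t => sub_nonneg.2 (ciInf_le_ciSup (Finite.bddBelow_range _)
    (Finite.bddAbove_range _))) hbound hgeom

/-- The common limit is that of the increasing minima: the vanishing spread squeezes every
coordinate onto it. -/
theorem IsPrimitive.exists_tendsto_pow_mulVec (hQ : Q ∈ rowStochastic ℝ ι)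
    (hprim : Q.IsPrimitive) (v : ι → ℝ) :
    ∃ c, ∀ i, Tendsto (fun t => (Q ^ t *ᵥ v) i) atTop (𝓝 c) := by
  have hbdd : BddAbove (Set.range fun t => ⨅ i, (Q ^ t *ᵥ v) i) :=
    ⟨⨆ i, v i, Set.forall_mem_range.2 fun t => (ciInf_le_ciSup (Finite.bddBelow_range _)
      (Finite.bddAbove_range _)).trans
        (by simpa using iSup_pow_mulVec_antitone hQ v (Nat.zero_le t))⟩
  have hinf := tendsto_atTop_ciSup (iInf_pow_mulVec_monotone hQ v) hbdd
  refine ⟨_, fun i => tendsto_of_tendsto_of_tendsto_of_le_of_le hinf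
    (by simpa using hinf.add (tendsto_spread_pow_mulVec hQ hprim v)) (fun t => ?_) (fun t => ?_)⟩
  · exact ciInf_le (Finite.bddBelow_range _) i
  · simpa [spread] using le_ciSup (Finite.bddAbove_range (Q ^ t *ᵥ v)) i

end Consensus

section LimitRow

variable {Q : Matrix ι ι ℝ}

theorem IsPrimitive.exists_tendsto_pow_apply [Nonempty ι] (hQ : Q ∈ rowStochastic ℝ ι)
    (hprim : Q.IsPrimitive) :
    ∃ ξ : ι → ℝ, ∀ i j, Tendsto (fun t => (Q ^ t) i j) atTop (𝓝 (ξ j)) := by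
  choose ξ hξ using fun j => hprim.exists_tendsto_pow_mulVec hQ (Pi.single j 1)
  exact ⟨ξ, fun i j => by simpa [mulVec_single_one] using hξ j i⟩

variable {ξ : ι → ℝ} (hξ : ∀ i j, Tendsto (fun t => (Q ^ t) i j) atTop (𝓝 (ξ j)))
include hξ

lemma tendsto_pow_mulVec_dotProduct (v : ι → ℝ) (i : ι) :
    Tendsto (fun t => (Q ^ t *ᵥ v) i) atTop (𝓝 (ξ ⬝ᵥ v)) := by
  simpa only [mulVec, dotProduct] using tendsto_finsetSum _ fun j _ => (hξ i j).mul_const (v j)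

lemma vecMul_eq_of_tendsto_pow [Nonempty ι] : ξ ᵥ* Q = ξ := by
  funext j
  let i := Classical.arbitrary ι
  have hshift : Tendsto (fun t => (Q ^ (t + 1)) i j) atTop (𝓝 (ξ j)) :=
    (hξ i j).comp (tendsto_add_atTop_nat 1)
  have hsucc : (fun t => (Q ^ (t + 1)) i j) = fun t => (Q ^ t *ᵥ fun k => Q k j) i := by
    funext t
    rw [pow_succ, mul_apply]
    rfl
  rw [hsucc] at hshift
  exact tendsto_nhds_unique (tendsto_pow_mulVec_dotProduct hξ _ i) hshift

lemma nonneg_of_tendsto_pow [Nonempty ι] (hQ : ∀ i j, 0 ≤ Q i j) (j : ι) : 0 ≤ ξ j :=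
  ge_of_tendsto' (hξ (Classical.arbitrary ι) j) fun t => pow_apply_nonneg hQ t _ j

lemma sum_eq_one_of_tendsto_pow [Nonempty ι] (hQ : Q ∈ rowStochastic ℝ ι) : ∑ j, ξ j = 1 := by
  have hone : Tendsto (fun t => (Q ^ t *ᵥ 1) (Classical.arbitrary ι)) atTop (𝓝 1) := by
    simp only [(pow_mem hQ _).2]
    exact tendsto_const_nhds
  rw [← dotProduct_one]
  exact tendsto_nhds_unique (tendsto_pow_mulVec_dotProduct hξ 1 _) hone

end LimitRow

end Matrix

open Matrix

theorem stmt7_general {N m : ℕ} (hmN : m < N)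
    (P : Matrix (Fin N) (Fin N) ℝ)
    -- |P| row-stochastic, positive diagonal
    (habs : ∀ i, ∑ j, |P i j| = 1) (hdiag : ∀ i, 0 < P i i)
    -- G(P) strongly connected (edge (v_j, v_i) whenever p_ij ≠ 0)
    (hSC : StronglyConnected (fun j i : Fin N => i ≠ j ∧ P i j ≠ 0))
    -- structurally balanced with bipartition V₁ = {i < m}, V₂ = {i ≥ m}
    (hbal : ∀ i j, i ≠ j → P i j ≠ 0 → (((i : ℕ) < m ↔ (j : ℕ) < m) ↔ 0 < P i j)) :
    (∀ i j, 0 ≤ (Matrix.diagonal (fun i : Fin N => if (i : ℕ) < m then (1 : ℝ) else -1)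
        * P * Matrix.diagonal (fun i : Fin N => if (i : ℕ) < m then (1 : ℝ) else -1)) i j) ∧
    (∀ i, ∑ j, (Matrix.diagonal (fun i : Fin N => if (i : ℕ) < m then (1 : ℝ) else -1)
        * P * Matrix.diagonal (fun i : Fin N => if (i : ℕ) < m then (1 : ℝ) else -1)) i j = 1) ∧
    ∃ ξ : Fin N → ℝ, (∀ i, 0 ≤ ξ i) ∧
      ξ ᵥ* (Matrix.diagonal (fun i : Fin N => if (i : ℕ) < m then (1 : ℝ) else -1)
        * P * Matrix.diagonal (fun i : Fin N => if (i : ℕ) < m then (1 : ℝ) else -1)) = ξ ∧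
      ∑ i, ξ i = 1 ∧
      ∀ x0 : Fin N → ℝ, ∀ i : Fin N,
        Tendsto (fun t => (P ^ t *ᵥ x0) i) atTop
          (nhds ((ξ ⬝ᵥ (Matrix.diagonal (fun i : Fin N => if (i : ℕ) < m then (1 : ℝ) else -1) *ᵥ x0))
            * (if (i : ℕ) < m then 1 else -1))) := by
  have : Nonempty (Fin N) := ⟨⟨m, hmN⟩⟩
  let p : Fin N → Prop := fun i => (i : ℕ) < m
  have hDD : diagonal (signVec p) * diagonal (signVec p) = (1 : Matrix (Fin N) (Fin N) ℝ) :=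
    diagonal_signVec_mul_self p
  have hDPD : diagonal (signVec p) * P * diagonal (signVec p) = P.map abs :=
    diagonal_signVec_mul_mul_diagonal_signVec p hdiag hbal
  have hQ : P.map abs ∈ rowStochastic ℝ (Fin N) :=
    mem_rowStochastic_iff_sum.2 ⟨fun _ _ => abs_nonneg _, habs⟩
  have hprim : (P.map abs).IsPrimitive :=
    isPrimitive_of_stronglyConnected hQ.1 (fun i => abs_pos.2 (hdiag i).ne')
      (hSC.mono fun _ _ h => abs_pos.2 h.2)
  obtain ⟨ξ, hξ⟩ := hprim.exists_tendsto_pow_apply hQ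
  have hd : (fun i : Fin N => if (i : ℕ) < m then (1 : ℝ) else -1) = signVec p := rfl
  rw [hd, hDPD]
  refine ⟨hQ.1, sum_row_of_mem_rowStochastic hQ, ξ, nonneg_of_tendsto_pow hξ hQ.1,
    vecMul_eq_of_tendsto_pow hξ, sum_eq_one_of_tendsto_pow hξ hQ, fun x0 i => ?_⟩
  have hgauge : ∀ t, (P ^ t *ᵥ x0) i
      = signVec p i * ((P.map abs) ^ t *ᵥ (diagonal (signVec p) *ᵥ x0)) i := fun t => by
    rw [pow_mulVec_eq_of_mul_self_eq_one hDD P, hDPD, mulVec_diagonal]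
  simp only [hgauge]
  rw [mul_comm]
  exact (tendsto_pow_mulVec_dotProduct hξ _ i).const_mul _

theorem stmt7 {N m : ℕ} (hm : 0 < m) (hmN : m < N)
    (P : Matrix (Fin N) (Fin N) ℝ)
    -- |P| row-stochastic, positive diagonal
    (habs : ∀ i, ∑ j, |P i j| = 1) (hdiag : ∀ i, 0 < P i i)
    -- G(P) strongly connected (edge (v_j, v_i) whenever p_ij ≠ 0)
    (hSC : StronglyConnected (fun j i : Fin N => i ≠ j ∧ P i j ≠ 0))
    -- structurally balanced with bipartition V₁ = {i < m}, V₂ = {i ≥ m}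
    (hbal : ∀ i j, i ≠ j → P i j ≠ 0 → (((i : ℕ) < m ↔ (j : ℕ) < m) ↔ 0 < P i j))
    -- at least one negative edge
    (hneg : ∃ i j, P i j < 0) :
    (∀ i j, 0 ≤ (Matrix.diagonal (fun i : Fin N => if (i : ℕ) < m then (1 : ℝ) else -1)
        * P * Matrix.diagonal (fun i : Fin N => if (i : ℕ) < m then (1 : ℝ) else -1)) i j) ∧
    (∀ i, ∑ j, (Matrix.diagonal (fun i : Fin N => if (i : ℕ) < m then (1 : ℝ) else -1)
        * P * Matrix.diagonal (fun i : Fin N => if (i : ℕ) < m then (1 : ℝ) else -1)) i j = 1) ∧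
    ∃ ξ : Fin N → ℝ, (∀ i, 0 ≤ ξ i) ∧
      ξ ᵥ* (Matrix.diagonal (fun i : Fin N => if (i : ℕ) < m then (1 : ℝ) else -1)
        * P * Matrix.diagonal (fun i : Fin N => if (i : ℕ) < m then (1 : ℝ) else -1)) = ξ ∧
      ∑ i, ξ i = 1 ∧
      ∀ x0 : Fin N → ℝ, ∀ i : Fin N,
        Tendsto (fun t => (P ^ t *ᵥ x0) i) atTop
          (nhds ((ξ ⬝ᵥ (Matrix.diagonal (fun i : Fin N => if (i : ℕ) < m then (1 : ℝ) else -1) *ᵥ x0))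
            * (if (i : ℕ) < m then 1 else -1))) :=
  stmt7_general hmN P habs hdiag hSC hbal
end

section
/- Let P be an irreducible N×N real matrix with positive diagonal such that |P| is row-stochastic and the signed graph G(P) is strongly connected and structurally unbalanced. Then for every initial condition x(0), the solution of x(t+1) = Px(t) converges to the zero vector. -/
/-!
The sup norm of `P ^ t *ᵥ x` is nonincreasing, and every limit point `z` of the orbit satisfies
`‖P ^ s *ᵥ z‖ = ‖z‖` for all `s`. For such a `z`, a row of `P` attaining the norm admits no
cancellation. With the positive diagonal this means: a coordinate of `P ^ (s + 1) *ᵥ z` attaining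
the norm (a peak) is a peak of `P ^ s *ᵥ z`, and so are its in-neighbours. Strong connectivity
makes every coordinate a peak at every time, and then `z i * z j` has the sign of `P i j` on
every edge, a structural balance. Hence `z = 0`.
-/

open Matrix Filter

/-- Structural balance of the signed graph of `P` (edge `(v_j, v_i)` of sign
`sgn p_ij` whenever `p_ij ≠ 0`, `i ≠ j`). -/
def MatBalanced {N : ℕ} (P : Matrix (Fin N) (Fin N) ℝ) : Prop :=
  ∃ f : Fin N → Bool, ∀ i j, i ≠ j → P i j ≠ 0 → (f i = f j ↔ 0 < P i j)

open Topology

section NonexpansiveIterate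

variable {E : Type*} [NormedAddCommGroup E] {f : E → E}

theorem norm_iterate_eq_of_tendsto_subseq (hf : Continuous f) {x z : E} {L : ℝ}
    (hL : Tendsto (fun t => ‖f^[t] x‖) atTop (𝓝 L)) {φ : ℕ → ℕ} (hφ : StrictMono φ)
    (hz : Tendsto (fun k => f^[φ k] x) atTop (𝓝 z)) (s : ℕ) :
    ‖f^[s] z‖ = L := by
  have hshift : Tendsto (fun k => ‖f^[s] (f^[φ k] x)‖) atTop (𝓝 ‖f^[s] z‖) :=
    ((hf.iterate s).tendsto z).comp hz |>.norm
  refine tendsto_nhds_unique hshift ?_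
  simp only [← Function.iterate_add_apply]
  exact hL.comp (tendsto_atTop_mono (fun k => Nat.le_add_left _ s) hφ.tendsto_atTop)

theorem tendsto_iterate_nhds_zero [ProperSpace E] (hf : Continuous f)
    (hle : ∀ x, ‖f x‖ ≤ ‖x‖) (hrigid : ∀ z, (∀ s, ‖f^[s] z‖ = ‖z‖) → z = 0) (x : E) :
    Tendsto (fun t => f^[t] x) atTop (𝓝 0) := by
  have hanti : Antitone fun t => ‖f^[t] x‖ := antitone_nat_of_succ_le fun t => by
    rw [Function.iterate_succ_apply']
    exact hle _
  have hL := tendsto_atTop_ciInf hanti ⟨0, by rintro _ ⟨t, rfl⟩; exact norm_nonneg _⟩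
  have hball : ∀ t, f^[t] x ∈ Metric.closedBall 0 ‖x‖ := fun t => by
    simpa using hanti (Nat.zero_le t)
  obtain ⟨z, -, φ, hφ, hz⟩ := (isCompact_closedBall (0 : E) ‖x‖).tendsto_subseq hball
  have horbit := norm_iterate_eq_of_tendsto_subseq hf hL hφ hz
  have hz0 : z = 0 := hrigid z fun s => by rw [horbit s, ← horbit 0, Function.iterate_zero_apply]
  rw [tendsto_zero_iff_norm_tendsto_zero]
  simpa [← horbit 0, hz0] using hL

end NonexpansiveIterate

theorem iterate_mulVec {ι R : Type*} [Fintype ι] [DecidableEq ι] [Semiring R] (P : Matrix ι ι R)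
    (t : ℕ) (x : ι → R) :
    (P *ᵥ ·)^[t] x = P ^ t *ᵥ x := by
  induction t with
  | zero => simp
  | succ t ih => rw [Function.iterate_succ_apply', ih, mulVec_mulVec, pow_succ']

theorem pos_iff_pos_iff_of_mul_mul_pos {a b p : ℝ} (h : 0 < a * (p * b)) :
    (0 < a ↔ 0 < b) ↔ 0 < p := by
  have ha : a ≠ 0 := by rintro rfl; simp at h
  have hb : b ≠ 0 := by rintro rfl; simp at h
  rw [← pos_iff_pos_of_mul_pos (show 0 < a * b * p by linarith), mul_pos_iff]
  rcases ha.lt_or_gt with ha | ha <;> rcases hb.lt_or_gt with hb | hb <;>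
    simp [ha, hb, ha.not_gt, hb.not_gt]

section AbsRowStochastic

variable {ι : Type*} [Fintype ι] {P : Matrix ι ι ℝ}

theorem norm_mulVec_le_of_sum_abs_le_one (hP : ∀ i, ∑ j, |P i j| ≤ 1) (x : ι → ℝ) :
    ‖P *ᵥ x‖ ≤ ‖x‖ := by
  refine (pi_norm_le_iff_of_nonneg (norm_nonneg x)).2 fun i => ?_
  calc ‖(P *ᵥ x) i‖ = |∑ j, P i j * x j| := rfl
    _ ≤ ∑ j, |P i j| * ‖x‖ := by
      refine (Finset.abs_sum_le_sum_abs _ _).trans (Finset.sum_le_sum fun j _ => ?_)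
      rw [abs_mul]
      exact mul_le_mul_of_nonneg_left (norm_le_pi_norm x j) (abs_nonneg _)
    _ ≤ ‖x‖ := by
      rw [← Finset.sum_mul]
      exact mul_le_of_le_one_left (norm_nonneg x) (hP i)

variable (hP : ∀ i, ∑ j, |P i j| = 1) {x : ι → ℝ} {i : ι}
include hP

/-- If row `i` of `P` attains the norm of `x`, there is no cancellation in `∑ j, P i j * x j`:
every term has the sign of the sum and modulus `|P i j| * ‖x‖`. -/
theorem mulVec_apply_mul_eq_of_abs_mulVec_apply_eq_norm (hi : |(P *ᵥ x) i| = ‖x‖) (j : ι) :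
    (P *ᵥ x) i * (P i j * x j) = ‖x‖ ^ 2 * |P i j| := by
  have hle : ∀ j ∈ Finset.univ, (P *ᵥ x) i * (P i j * x j) ≤ ‖x‖ ^ 2 * |P i j| := by
    intro j _
    calc (P *ᵥ x) i * (P i j * x j) ≤ |(P *ᵥ x) i| * (|P i j| * ‖x j‖) :=
          (le_abs_self _).trans_eq (by rw [abs_mul, abs_mul, Real.norm_eq_abs])
      _ ≤ ‖x‖ * (|P i j| * ‖x‖) := by
          rw [hi]; gcongr; exact norm_le_pi_norm x j
      _ = ‖x‖ ^ 2 * |P i j| := by ring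
  have hsum : ∑ j, (P *ᵥ x) i * (P i j * x j) = ∑ j, ‖x‖ ^ 2 * |P i j| := by
    rw [← Finset.mul_sum, ← Finset.mul_sum, hP, mul_one, ← hi, sq_abs, sq]
    rfl
  exact (Finset.sum_eq_sum_iff_of_le hle).1 hsum j (Finset.mem_univ j)

theorem mulVec_apply_eq_of_abs_mulVec_apply_eq_norm (hii : 0 < P i i)
    (hi : |(P *ᵥ x) i| = ‖x‖) : (P *ᵥ x) i = x i := by
  have h := mulVec_apply_mul_eq_of_abs_mulVec_apply_eq_norm hP hi i
  rw [abs_of_pos hii, ← hi, sq_abs] at h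
  have h' : (P *ᵥ x) i * ((P *ᵥ x) i - x i) = 0 :=
    (mul_eq_zero.1 (by linear_combination -h : P i i * _ = 0)).resolve_left hii.ne'
  rcases mul_eq_zero.1 h' with h0 | h0
  · have hx : ‖x‖ = 0 := by rw [← hi, h0, abs_zero]
    rw [h0, norm_eq_zero.1 hx, Pi.zero_apply]
  · linarith

theorem abs_apply_eq_norm_of_abs_mulVec_apply_eq_norm (hi : |(P *ᵥ x) i| = ‖x‖) {j : ι}
    (hij : P i j ≠ 0) : |x j| = ‖x‖ := by
  have h := congrArg abs (mulVec_apply_mul_eq_of_abs_mulVec_apply_eq_norm hP hi j)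
  simp only [abs_mul, abs_abs, abs_pow, abs_norm, hi] at h
  have h' : ‖x‖ * (‖x‖ - |x j|) = 0 :=
    (mul_eq_zero.1 (by linear_combination -h : |P i j| * _ = 0)).resolve_left (abs_ne_zero.2 hij)
  rcases mul_eq_zero.1 h' with h0 | h0
  · exact le_antisymm (norm_le_pi_norm x j) (h0 ▸ abs_nonneg _)
  · linarith

end AbsRowStochastic

section NormPreservingOrbit

variable {ι : Type*} [Fintype ι] {P : Matrix ι ι ℝ} (hP : ∀ i, ∑ j, |P i j| = 1) {z : ι → ℝ}
  (hz : ∀ s, ‖(P *ᵥ ·)^[s] z‖ = ‖z‖)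
include hP hz

theorem antitone_abs_iterate_mulVec_apply_eq_norm {i : ι} (hii : 0 < P i i) :
    Antitone fun s => |((P *ᵥ ·)^[s] z) i| = ‖z‖ := by
  refine antitone_nat_of_succ_le fun s h => ?_
  rw [Function.iterate_succ_apply', ← hz s] at h
  rw [← hz s, ← mulVec_apply_eq_of_abs_mulVec_apply_eq_norm hP hii h]
  exact h

theorem abs_iterate_mulVec_apply_eq_norm_of_ne_zero {s : ℕ} {i j : ι}
    (hi : |((P *ᵥ ·)^[s + 1] z) i| = ‖z‖) (hij : P i j ≠ 0) :
    |((P *ᵥ ·)^[s] z) j| = ‖z‖ := by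
  rw [Function.iterate_succ_apply', ← hz s] at hi
  rw [← hz s]
  exact abs_apply_eq_norm_of_abs_mulVec_apply_eq_norm hP hi hij

/-- Each `(P *ᵥ ·)^[s] z` attains its norm at some coordinate; by pigeonhole one coordinate does
so for infinitely many `s`, hence for all `s` by antitonicity. -/
theorem exists_forall_abs_iterate_mulVec_apply_eq_norm [Nonempty ι] (hdiag : ∀ i, 0 < P i i) :
    ∃ i, ∀ s, |((P *ᵥ ·)^[s] z) i| = ‖z‖ := by
  have hpeak : ∀ s, ∃ i, |((P *ᵥ ·)^[s] z) i| = ‖z‖ := fun s => by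
    obtain ⟨i, hi⟩ := (IsGreatest.pi_norm ((P *ᵥ ·)^[s] z)).1
    exact ⟨i, hi.trans (hz s)⟩
  choose g hg using hpeak
  obtain ⟨i, hi⟩ := Finite.exists_infinite_fiber g
  refine ⟨i, fun s => ?_⟩
  obtain ⟨t, hti, hst⟩ := (Set.infinite_coe_iff.1 hi).exists_gt s
  exact antitone_abs_iterate_mulVec_apply_eq_norm hP hz (hdiag i) hst.le
    ((show g t = i from hti) ▸ hg t)

theorem abs_iterate_mulVec_apply_eq_norm [Nonempty ι] (hdiag : ∀ i, 0 < P i i)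
    (hSC : StronglyConnected fun j i : ι => i ≠ j ∧ P i j ≠ 0) (s : ℕ) (j : ι) :
    |((P *ᵥ ·)^[s] z) j| = ‖z‖ := by
  obtain ⟨i, hi⟩ := exists_forall_abs_iterate_mulVec_apply_eq_norm hP hz hdiag
  induction hSC j i using Relation.ReflTransGen.head_induction_on generalizing s with
  | refl => exact hi s
  | head hadj _ ih => exact abs_iterate_mulVec_apply_eq_norm_of_ne_zero hP hz (ih (s + 1)) hadj.2

end NormPreservingOrbit

theorem matBalanced_of_abs_mulVec_apply_eq_norm {N : ℕ} {P : Matrix (Fin N) (Fin N) ℝ}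
    (hP : ∀ i, ∑ j, |P i j| = 1) (hdiag : ∀ i, 0 < P i i) {z : Fin N → ℝ} (hz : z ≠ 0)
    (htight : ∀ i, |(P *ᵥ z) i| = ‖z‖) : MatBalanced P := by
  refine ⟨fun k => decide (0 < z k), fun i j _ hij => ?_⟩
  have h := mulVec_apply_mul_eq_of_abs_mulVec_apply_eq_norm hP (htight i) j
  rw [mulVec_apply_eq_of_abs_mulVec_apply_eq_norm hP (hdiag i) (htight i)] at h
  rw [decide_eq_decide]
  exact pos_iff_pos_iff_of_mul_mul_pos (h ▸ mul_pos (pow_pos (norm_pos_iff.2 hz) 2) (abs_pos.2 hij))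

theorem eq_zero_of_forall_norm_iterate_mulVec_eq {N : ℕ} {P : Matrix (Fin N) (Fin N) ℝ}
    (hP : ∀ i, ∑ j, |P i j| = 1) (hdiag : ∀ i, 0 < P i i)
    (hSC : StronglyConnected fun j i : Fin N => i ≠ j ∧ P i j ≠ 0) (hUnbal : ¬ MatBalanced P)
    {z : Fin N → ℝ} (hz : ∀ s, ‖(P *ᵥ ·)^[s] z‖ = ‖z‖) : z = 0 := by
  by_contra hz0
  obtain ⟨i, -⟩ := Function.ne_iff.1 hz0
  have : Nonempty (Fin N) := ⟨i⟩
  exact hUnbal <| matBalanced_of_abs_mulVec_apply_eq_norm hP hdiag hz0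
    (abs_iterate_mulVec_apply_eq_norm hP hz hdiag hSC 1)

theorem stmt8 {N : ℕ} (P : Matrix (Fin N) (Fin N) ℝ)
    (habs : ∀ i, ∑ j, |P i j| = 1) (hdiag : ∀ i, 0 < P i i)
    (hSC : StronglyConnected (fun j i : Fin N => i ≠ j ∧ P i j ≠ 0))
    (hUnbal : ¬ MatBalanced P) :
    ∀ x0 : Fin N → ℝ, Tendsto (fun t => P ^ t *ᵥ x0) atTop (nhds 0) := by
  intro x0
  simp only [← iterate_mulVec]
  exact tendsto_iterate_nhds_zero (continuous_const.matrix_mulVec continuous_id)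
    (norm_mulVec_le_of_sum_abs_le_one fun i => (habs i).le)
    (fun z hz => eq_zero_of_forall_norm_iterate_mulVec_eq habs hdiag hSC hUnbal hz) x0
end

section
/- Let P be an irreducible N×N real matrix with positive diagonal, |P| row-stochastic, and G(P) having at least one negative edge. The discrete-time system x(t+1) = Px(t) polarizes (i.e., for almost all initial conditions all |x_i(t)| converge to a common positive limit and the limits of x_i(t) take both signs) if and only if G(P) is structurally balanced. -/
/-!
Balance implies polarization: the bipartition gives a signature matrix `D = diagonal s`,
`s i = ±1`, with `D * P * D = |P|`. The matrix `|P|` is row-stochastic with positive diagonal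
and strongly connected graph, hence primitive, so `|P| ^ t *ᵥ x` reaches a consensus `π ⬝ᵥ x`
(the spread between the largest and smallest coordinate contracts geometrically). Therefore
`(P ^ t *ᵥ x) i → s i * (π ⬝ᵥ D *ᵥ x)`, which polarizes off the Lebesgue-null hyperplane
`π ⬝ᵥ D *ᵥ x = 0`; a negative edge joins two vertices of opposite sign.

Polarization implies balance: a polarized limit `L` is a fixed point of `P` with `|L i| = c > 0`,
so `c = |∑ j, P i j * L j| ≤ ∑ j, |P i j| * c ≤ c` is an equality in the triangle inequality.
Hence every nonzero `P i j * L j` has the sign of `L i`, and the signs of `L` balance `G(P)`.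
-/

open Matrix Filter MeasureTheory

/-- The system `x(t+1) = P x(t)` polarizes: for almost all initial conditions,
all `|x_i(t)|` converge to a common positive limit and the limits of the
`x_i(t)` take both signs. -/
def Polarizes {N : ℕ} (P : Matrix (Fin N) (Fin N) ℝ) : Prop :=
  ∀ᵐ x0 : Fin N → ℝ ∂volume, ∃ c : ℝ, 0 < c ∧ ∃ L : Fin N → ℝ,
    (∀ i, |L i| = c) ∧
    (∀ i, Tendsto (fun t => (P ^ t *ᵥ x0) i) atTop (nhds (L i))) ∧
    ∃ i j, i ≠ j ∧ L i = -L j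

open Topology

theorem Matrix.mul_apply_pos {ι κ ν R : Type*} [Fintype κ] [Semiring R] [PartialOrder R]
    [IsOrderedRing R] [PosMulStrictMono R] {A : Matrix ι κ R} {B : Matrix κ ν R}
    (hA : ∀ i j, 0 ≤ A i j) (hB : ∀ i j, 0 ≤ B i j) {i : ι} {k : κ} {j : ν}
    (hik : 0 < A i k) (hkj : 0 < B k j) : 0 < (A * B) i j :=
  (Finset.sum_pos_iff_of_nonneg fun l _ => mul_nonneg (hA i l) (hB l j)).2
    ⟨k, Finset.mem_univ k, mul_pos hik hkj⟩

section Primitive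

variable {σ R : Type*} [Fintype σ] [DecidableEq σ] [Ring R] [LinearOrder R]
  [IsStrictOrderedRing R] {A : Matrix σ σ R}

theorem Matrix.exists_pow_apply_pos_of_reflTransGen_s9 (hA : ∀ i j, 0 ≤ A i j) {i j : σ}
    (h : Relation.ReflTransGen (fun i j => 0 < A i j) i j) : ∃ k, 0 < (A ^ k) i j := by
  induction h with
  | refl => exact ⟨0, by simp⟩
  | tail _ hedge ih =>
    obtain ⟨k, hk⟩ := ih
    exact ⟨k + 1, pow_succ A k ▸ mul_apply_pos (pow_apply_nonneg hA k) hA hk hedge⟩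

theorem Matrix.pow_apply_pos_of_le_s9 (hA : ∀ i j, 0 ≤ A i j) (hdiag : ∀ i, 0 < A i i)
    {k l : ℕ} (hkl : k ≤ l) {i j : σ} (h : 0 < (A ^ k) i j) : 0 < (A ^ l) i j := by
  induction l, hkl using Nat.le_induction with
  | base => exact h
  | succ l _ ih => exact pow_succ A l ▸ mul_apply_pos (pow_apply_nonneg hA l) hA ih (hdiag j)

theorem Matrix.isPrimitive_of_diag_pos (hA : ∀ i j, 0 ≤ A i j) (hdiag : ∀ i, 0 < A i i)
    (hconn : ∀ i j, Relation.ReflTransGen (fun i j => 0 < A i j) i j) : A.IsPrimitive := by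
  choose k hk using fun p : σ × σ => exists_pow_apply_pos_of_reflTransGen_s9 hA (hconn p.1 p.2)
  refine ⟨hA, Finset.univ.sup k + 1, Nat.succ_pos _, fun i j => ?_⟩
  exact pow_apply_pos_of_le_s9 hA hdiag
    ((Finset.le_sup (Finset.mem_univ (i, j))).trans (Nat.le_succ _)) (hk (i, j))

end Primitive

theorem exists_tendsto_of_antitone_of_monotone {M m : ℕ → ℝ} (hM : Antitone M)
    (hm : Monotone m) (hmM : ∀ t, m t ≤ M t) (hgap : ∀ ε > 0, ∃ t, M t - m t < ε) :
    ∃ c, Tendsto M atTop (𝓝 c) ∧ Tendsto m atTop (𝓝 c) := by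
  have hMbdd : BddBelow (Set.range M) :=
    ⟨m 0, by rintro _ ⟨t, rfl⟩; exact (hm (Nat.zero_le t)).trans (hmM t)⟩
  have hmbdd : BddAbove (Set.range m) :=
    ⟨M 0, by rintro _ ⟨t, rfl⟩; exact (hmM t).trans (hM (Nat.zero_le t))⟩
  have hMlim := tendsto_atTop_ciInf hM hMbdd
  have hmlim := tendsto_atTop_ciSup hm hmbdd
  have hle : ⨅ t, M t ≤ ⨆ t, m t := le_of_forall_pos_lt_add fun ε hε => by
    obtain ⟨t, ht⟩ := hgap ε hε
    linarith [ciInf_le hMbdd t, le_ciSup hmbdd t]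
  have hge : ⨆ t, m t ≤ ⨅ t, M t := le_of_tendsto_of_tendsto' hmlim hMlim hmM
  exact ⟨_, hMlim, le_antisymm hge hle ▸ hmlim⟩

section Stochastic

variable {σ : Type*} [Fintype σ] [DecidableEq σ] {Q : Matrix σ σ ℝ}

theorem Matrix.sub_mulVec_apply_of_mem_rowStochastic (hQ : Q ∈ rowStochastic ℝ σ) (b : ℝ)
    (y : σ → ℝ) (i : σ) : b - (Q *ᵥ y) i = ∑ j, Q i j * (b - y j) := by
  simp only [mul_sub, Finset.sum_sub_distrib, ← Finset.sum_mul, sum_row_of_mem_rowStochastic hQ,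
    one_mul, mulVec, dotProduct]

theorem Matrix.mulVec_apply_le_of_mem_rowStochastic (hQ : Q ∈ rowStochastic ℝ σ) {b : ℝ}
    {y : σ → ℝ} (hy : ∀ j, y j ≤ b) (i j₀ : σ) : (Q *ᵥ y) i ≤ b - Q i j₀ * (b - y j₀) := by
  have := Finset.single_le_sum (fun j _ => mul_nonneg (hQ.1 i j) (sub_nonneg.2 (hy j)))
    (Finset.mem_univ j₀)
  linarith [sub_mulVec_apply_of_mem_rowStochastic hQ b y i]

theorem Matrix.le_mulVec_apply_of_mem_rowStochastic (hQ : Q ∈ rowStochastic ℝ σ) {a : ℝ}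
    {y : σ → ℝ} (hy : ∀ j, a ≤ y j) (i : σ) : a ≤ (Q *ᵥ y) i := by
  have := Finset.sum_nonpos fun j (_ : j ∈ Finset.univ) =>
    mul_nonpos_of_nonneg_of_nonpos (hQ.1 i j) (sub_nonpos.2 (hy j))
  linarith [sub_mulVec_apply_of_mem_rowStochastic hQ a y i]

variable [Nonempty σ]

theorem Matrix.iSup_mulVec_le_of_mem_rowStochastic (hQ : Q ∈ rowStochastic ℝ σ)
    (y : σ → ℝ) : ⨆ i, (Q *ᵥ y) i ≤ ⨆ j, y j :=
  ciSup_le fun i => (mulVec_apply_le_of_mem_rowStochastic hQ (Finite.le_ciSup y) i i).trans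
    (sub_le_self _ (mul_nonneg (hQ.1 i i) (sub_nonneg.2 (Finite.le_ciSup y i))))

theorem Matrix.iInf_le_mulVec_of_mem_rowStochastic (hQ : Q ∈ rowStochastic ℝ σ)
    (y : σ → ℝ) : ⨅ j, y j ≤ ⨅ i, (Q *ᵥ y) i :=
  le_ciInf fun i => le_mulVec_apply_of_mem_rowStochastic hQ (ciInf_le (Finite.bddBelow_range y)) i

theorem Matrix.iSup_sub_iInf_mulVec_le (hQ : Q ∈ rowStochastic ℝ σ) {δ : ℝ}
    (hδ : ∀ i j, δ ≤ Q i j) (y : σ → ℝ) :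
    (⨆ i, (Q *ᵥ y) i) - ⨅ i, (Q *ᵥ y) i ≤ (1 - δ) * ((⨆ j, y j) - ⨅ j, y j) := by
  obtain ⟨j₀, hj₀⟩ := exists_eq_ciInf_of_finite (f := y)
  have hosc : 0 ≤ (⨆ j, y j) - y j₀ := sub_nonneg.2 (Finite.le_ciSup y j₀)
  have hsup : ⨆ i, (Q *ᵥ y) i ≤ (⨆ j, y j) - δ * ((⨆ j, y j) - y j₀) :=
    ciSup_le fun i => (mulVec_apply_le_of_mem_rowStochastic hQ (Finite.le_ciSup y) i j₀).trans
      (sub_le_sub_left (mul_le_mul_of_nonneg_right (hδ i j₀) hosc) _)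
  have hinf := iInf_le_mulVec_of_mem_rowStochastic hQ y
  rw [← hj₀] at hinf ⊢
  linarith

theorem Matrix.iSup_sub_iInf_pow_mulVec_le (hQ : Q ∈ rowStochastic ℝ σ) {T : ℕ} {δ : ℝ}
    (hδ : ∀ i j, δ ≤ (Q ^ T) i j) (hδ₁ : δ ≤ 1) (x : σ → ℝ) (k : ℕ) :
    (⨆ i, (Q ^ (T * k) *ᵥ x) i) - ⨅ i, (Q ^ (T * k) *ᵥ x) i
      ≤ (1 - δ) ^ k * ((⨆ i, x i) - ⨅ i, x i) := by
  induction k with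
  | zero => simp
  | succ k ih =>
    calc (⨆ i, (Q ^ (T * (k + 1)) *ᵥ x) i) - ⨅ i, (Q ^ (T * (k + 1)) *ᵥ x) i
        ≤ (1 - δ) * ((⨆ i, (Q ^ (T * k) *ᵥ x) i) - ⨅ i, (Q ^ (T * k) *ᵥ x) i) := by
          rw [show T * (k + 1) = T + T * k by ring, pow_add, ← mulVec_mulVec]
          exact iSup_sub_iInf_mulVec_le (pow_mem hQ T) hδ (Q ^ (T * k) *ᵥ x)
      _ ≤ (1 - δ) * ((1 - δ) ^ k * ((⨆ i, x i) - ⨅ i, x i)) :=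
          mul_le_mul_of_nonneg_left ih (sub_nonneg.2 hδ₁)
      _ = (1 - δ) ^ (k + 1) * ((⨆ i, x i) - ⨅ i, x i) := by ring

theorem Matrix.exists_tendsto_pow_mulVec_of_isPrimitive (hQ : Q ∈ rowStochastic ℝ σ)
    (hprim : Q.IsPrimitive) (x : σ → ℝ) :
    ∃ c, ∀ i, Tendsto (fun t => (Q ^ t *ᵥ x) i) atTop (𝓝 c) := by
  obtain ⟨-, T, -, hT⟩ := hprim
  obtain ⟨p, hp⟩ := exists_eq_ciInf_of_finite (f := fun p : σ × σ => (Q ^ T) p.1 p.2)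
  set δ := ⨅ p : σ × σ, (Q ^ T) p.1 p.2
  have hδ : ∀ i j, δ ≤ (Q ^ T) i j := fun i j => ciInf_le (Finite.bddBelow_range _) (i, j)
  have hδpos : 0 < δ := hp ▸ hT p.1 p.2
  have hδ₁ : δ ≤ 1 := (hδ p.1 p.1).trans (le_one_of_mem_rowStochastic (pow_mem hQ T))
  set M : ℕ → ℝ := fun t => ⨆ i, (Q ^ t *ᵥ x) i
  set m : ℕ → ℝ := fun t => ⨅ i, (Q ^ t *ᵥ x) i
  have hshift : ∀ s t, Q ^ (s + t) *ᵥ x = Q ^ s *ᵥ (Q ^ t *ᵥ x) := fun s t => by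
    rw [pow_add, mulVec_mulVec]
  have hM : Antitone M := antitone_nat_of_succ_le fun t => by
    simpa [M, add_comm t 1, hshift] using iSup_mulVec_le_of_mem_rowStochastic hQ (Q ^ t *ᵥ x)
  have hm : Monotone m := monotone_nat_of_le_succ fun t => by
    simpa [m, add_comm t 1, hshift] using iInf_le_mulVec_of_mem_rowStochastic hQ (Q ^ t *ᵥ x)
  have hgap : ∀ ε > 0, ∃ t, M t - m t < ε := fun ε hε => by
    have hlim : Tendsto (fun k => (1 - δ) ^ k * ((⨆ i, x i) - ⨅ i, x i)) atTop (𝓝 0) := by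
      simpa using (tendsto_pow_atTop_nhds_zero_of_lt_one (sub_nonneg.2 hδ₁)
        (sub_lt_self 1 hδpos)).mul_const ((⨆ i, x i) - ⨅ i, x i)
    obtain ⟨k, hk⟩ := (hlim.eventually (gt_mem_nhds hε)).exists
    exact ⟨T * k, (iSup_sub_iInf_pow_mulVec_le hQ hδ hδ₁ x k).trans_lt hk⟩
  have hbelow : ∀ t i, m t ≤ (Q ^ t *ᵥ x) i := fun t i => ciInf_le (Finite.bddBelow_range _) i
  have habove : ∀ t i, (Q ^ t *ᵥ x) i ≤ M t := fun t i => Finite.le_ciSup _ i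
  obtain ⟨c, hMc, hmc⟩ := exists_tendsto_of_antitone_of_monotone hM hm
    (fun t => (hbelow t (Classical.arbitrary σ)).trans (habove t _)) hgap
  exact ⟨c, fun i => tendsto_of_tendsto_of_tendsto_of_le_of_le hmc hMc (hbelow · i) (habove · i)⟩

theorem Matrix.exists_tendsto_pow_mulVec_dotProduct (hQ : Q ∈ rowStochastic ℝ σ)
    (hprim : Q.IsPrimitive) :
    ∃ π : σ → ℝ, π ⬝ᵥ 1 = 1 ∧
      ∀ x i, Tendsto (fun t => (Q ^ t *ᵥ x) i) atTop (𝓝 (π ⬝ᵥ x)) := by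
  choose π hπ using fun j => exists_tendsto_pow_mulVec_of_isPrimitive hQ hprim (Pi.single j 1)
  have hlim : ∀ x i, Tendsto (fun t => (Q ^ t *ᵥ x) i) atTop (𝓝 (π ⬝ᵥ x)) := fun x i => by
    simp only [mulVec_single_one, col_apply] at hπ
    simpa [mulVec, dotProduct] using tendsto_finsetSum Finset.univ fun j _ =>
      (hπ j i).mul_const (x j)
  refine ⟨π, tendsto_nhds_unique (hlim 1 (Classical.arbitrary σ)) ?_, hlim⟩
  simp [(pow_mem hQ _).2]

end Stochastic

theorem ae_dotProduct_ne_zero {ι : Type*} [Fintype ι] {w : ι → ℝ} (hw : w ≠ 0) :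
    ∀ᵐ x ∂(volume : Measure (ι → ℝ)), w ⬝ᵥ x ≠ 0 := by
  have hker : LinearMap.ker (dotProductBilin ℝ ℝ w) ≠ ⊤ := fun h =>
    hw (dotProduct_self_eq_zero.1 (LinearMap.mem_ker.1 (h ▸ Submodule.mem_top : w ∈ _)))
  exact measure_mono_null (fun x hx => by simpa using hx) (Measure.addHaar_submodule volume _ hker)

theorem Matrix.mulVec_eq_of_tendsto_pow_mulVec {ι : Type*} [Fintype ι] [DecidableEq ι]
    {P : Matrix ι ι ℝ} {x L : ι → ℝ}
    (h : ∀ i, Tendsto (fun t => (P ^ t *ᵥ x) i) atTop (𝓝 (L i))) : P *ᵥ L = L := by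
  have hlim : Tendsto (fun t => P ^ t *ᵥ x) atTop (𝓝 L) := tendsto_pi_nhds.2 h
  have hstep : Tendsto (fun t => P *ᵥ (P ^ t *ᵥ x)) atTop (𝓝 (P *ᵥ L)) :=
    ((continuous_const.matrix_mulVec continuous_id).tendsto L).comp hlim
  refine tendsto_nhds_unique ?_ ((tendsto_add_atTop_iff_nat 1).2 hlim)
  simpa [pow_succ', mulVec_mulVec] using hstep

theorem exists_tendsto_pow_mulVec_of_abs_eq_sign_mul {σ : Type*} [Fintype σ] [DecidableEq σ]
    [Nonempty σ] {P : Matrix σ σ ℝ} (habs : ∀ i, ∑ j, |P i j| = 1) (hdiag : ∀ i, 0 < P i i)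
    (hSC : StronglyConnected (fun j i : σ => i ≠ j ∧ P i j ≠ 0)) {s : σ → ℝ}
    (hs : ∀ i, |s i| = 1) (hsP : ∀ i j, s i * P i j * s j = |P i j|) :
    ∃ w : σ → ℝ, w ≠ 0 ∧ ∀ x i, Tendsto (fun t => (P ^ t *ᵥ x) i) atTop (𝓝 (s i * w ⬝ᵥ x)) := by
  set D : Matrix σ σ ℝ := diagonal s
  have hss : ∀ i, s i * s i = 1 := fun i => by rw [← abs_mul_abs_self, hs, one_mul]
  have hDD : D * D = 1 := by rw [diagonal_mul_diagonal, funext hss, diagonal_one]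
  set Q := D * P * D
  have hQ : ∀ i j, Q i j = |P i j| := fun i j => by simp [Q, D, hsP]
  have hQstoch : Q ∈ rowStochastic ℝ σ :=
    mem_rowStochastic_iff_sum.2 ⟨fun i j => hQ i j ▸ abs_nonneg _, fun i => by simp [hQ, habs]⟩
  have hprim : Q.IsPrimitive := isPrimitive_of_diag_pos hQstoch.1
    (fun i => hQ i i ▸ abs_pos.2 (hdiag i).ne')
    (fun i j => Relation.ReflTransGen.swap _ _ (Relation.ReflTransGen.mono
      (fun a b hab => show 0 < Q b a from hQ b a ▸ abs_pos.2 hab.2) _ _ (hSC j i)))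
  obtain ⟨π, hπ1, hπ⟩ := exists_tendsto_pow_mulVec_dotProduct hQstoch hprim
  have hPpow : ∀ t, P ^ t = D * Q ^ t * D := fun t => by
    have hP : P = D * Q * D := by simp only [Q, ← mul_assoc, hDD, one_mul, mul_assoc P, mul_one]
    rw [hP]
    exact Units.conj_pow ⟨D, D, hDD, hDD⟩ Q t
  refine ⟨π ᵥ* D, fun hw => ?_, fun x i => ?_⟩
  · have : π = π ᵥ* D ᵥ* D := by rw [vecMul_vecMul, hDD, vecMul_one]
    simp [hw] at this
    simp [this] at hπ1
  · simp only [hPpow, ← mulVec_mulVec, D, mulVec_diagonal, ← dotProduct_mulVec]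
    exact (hπ _ i).const_mul (s i)

variable {N : ℕ} {P : Matrix (Fin N) (Fin N) ℝ}

theorem matBalanced_of_mulVec_eq_self (habs : ∀ i, ∑ j, |P i j| ≤ 1) {L : Fin N → ℝ} {c : ℝ}
    (hc : 0 < c) (hL : ∀ i, |L i| = c) (hfix : P *ᵥ L = L) : MatBalanced P := by
  have hterm : ∀ i j, P i j * (L i * L j) = |P i j| * c ^ 2 := by
    intro i j
    have hle : ∀ j, P i j * (L i * L j) ≤ |P i j| * c ^ 2 := fun j => by
      simpa [abs_mul, hL, sq] using le_abs_self (P i j * (L i * L j))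
    have hsum : ∑ j, (|P i j| * c ^ 2 - P i j * (L i * L j)) ≤ 0 := by
      have hLi : L i * L i = c ^ 2 := by rw [← abs_mul_abs_self, hL, sq]
      have hrow : ∑ j, P i j * L j = L i := congrFun hfix i
      rw [Finset.sum_sub_distrib, ← Finset.sum_mul]
      simp_rw [mul_left_comm (P i _) (L i), ← Finset.mul_sum, hrow, hLi]
      nlinarith [habs i, sq_nonneg c]
    have := (Finset.sum_eq_zero_iff_of_nonneg fun j _ => sub_nonneg.2 (hle j)).1
      (le_antisymm hsum (Finset.sum_nonneg fun j _ => sub_nonneg.2 (hle j))) j (Finset.mem_univ j)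
    linarith
  refine ⟨fun i => decide (0 < L i), fun i j _ hP => ?_⟩
  have hpos : 0 < P i j * (L i * L j) := by rw [hterm]; positivity
  have hLi : L i ≠ 0 := abs_pos.1 (hL i ▸ hc)
  have hLj : L j ≠ 0 := abs_pos.1 (hL j ▸ hc)
  rw [decide_eq_decide, pos_iff_pos_of_mul_pos hpos, mul_pos_iff]
  rcases hLi.lt_or_gt with hi | hi <;> rcases hLj.lt_or_gt with hj | hj <;>
    simp [hi, hj, not_lt_of_gt]

theorem matBalanced_of_polarizes (habs : ∀ i, ∑ j, |P i j| ≤ 1) (h : Polarizes P) :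
    MatBalanced P := by
  obtain ⟨x, c, hc, L, hL, hlim, -⟩ := h.exists
  exact matBalanced_of_mulVec_eq_self habs hc hL (mulVec_eq_of_tendsto_pow_mulVec hlim)

theorem MatBalanced.exists_signs (hb : MatBalanced P) (hdiag : ∀ i, 0 < P i i) :
    ∃ s : Fin N → ℝ, (∀ i, |s i| = 1) ∧ ∀ i j, s i * P i j * s j = |P i j| := by
  obtain ⟨f, hf⟩ := hb
  refine ⟨fun i => if f i then 1 else -1, fun i => by dsimp only; cases f i <;> simp, fun i j => ?_⟩
  dsimp only
  by_cases hij : i = j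
  · subst hij
    rw [abs_of_pos (hdiag i)]
    cases f i <;> simp
  by_cases hP : P i j = 0
  · simp [hP]
  have hfij := hf i j hij hP
  rcases lt_or_gt_of_ne hP with h | h
  · rw [abs_of_neg h]
    cases hi : f i <;> cases hj : f j <;> simp_all [h.not_gt]
  · rw [abs_of_pos h]
    cases hi : f i <;> cases hj : f j <;> simp_all

theorem polarizes_of_tendsto {s w : Fin N → ℝ} (hs : ∀ i, |s i| = 1)
    (hopp : ∃ i j, i ≠ j ∧ s i = -s j) (hw : w ≠ 0)
    (hlim : ∀ x i, Tendsto (fun t => (P ^ t *ᵥ x) i) atTop (𝓝 (s i * w ⬝ᵥ x))) :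
    Polarizes P := by
  filter_upwards [ae_dotProduct_ne_zero hw] with x hx
  obtain ⟨i, j, hij, hsij⟩ := hopp
  exact ⟨|w ⬝ᵥ x|, abs_pos.2 hx, fun i => s i * w ⬝ᵥ x, fun i => by rw [abs_mul, hs i, one_mul],
    hlim x, i, j, hij, by simp only [hsij, neg_mul]⟩

theorem polarizes_of_matBalanced (habs : ∀ i, ∑ j, |P i j| = 1) (hdiag : ∀ i, 0 < P i i)
    (hSC : StronglyConnected (fun j i : Fin N => i ≠ j ∧ P i j ≠ 0))
    (hneg : ∃ i j, P i j < 0) (hb : MatBalanced P) : Polarizes P := by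
  obtain ⟨i₀, j₀, hP₀⟩ := hneg
  have : Nonempty (Fin N) := ⟨i₀⟩
  obtain ⟨s, hs, hsP⟩ := hb.exists_signs hdiag
  obtain ⟨w, hw, hlim⟩ := exists_tendsto_pow_mulVec_of_abs_eq_sign_mul habs hdiag hSC hs hsP
  have hne : i₀ ≠ j₀ := by
    rintro rfl
    exact (hdiag i₀).not_gt hP₀
  have hopp : s i₀ = -s j₀ := by
    have hss : s j₀ * s j₀ = 1 := by rw [← abs_mul_abs_self, hs, one_mul]
    have hprod : s i₀ * s j₀ = -1 :=
      mul_left_cancel₀ hP₀.ne (by linear_combination hsP i₀ j₀ + abs_of_neg hP₀)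
    linear_combination s j₀ * hprod - s i₀ * hss
  exact polarizes_of_tendsto hs ⟨i₀, j₀, hne, hopp⟩ hw hlim

theorem stmt9 {N : ℕ} (P : Matrix (Fin N) (Fin N) ℝ)
    (habs : ∀ i, ∑ j, |P i j| = 1) (hdiag : ∀ i, 0 < P i i)
    (hSC : StronglyConnected (fun j i : Fin N => i ≠ j ∧ P i j ≠ 0))
    (hneg : ∃ i j, P i j < 0) :
    Polarizes P ↔ MatBalanced P :=
  ⟨matBalanced_of_polarizes fun i => (habs i).le, polarizes_of_matBalanced habs hdiag hSC hneg⟩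
end

section
/- Let P = [[P₁₁, 0],[P₂₁, P₂₂]] with P₁₁ ∈ ℝ^{r×r} irreducible, |P| row-stochastic, P having positive diagonal entries, and G(P) containing a directed spanning tree rooted in the vertex set of G(P₁₁). If G(P₁₁) is structurally unbalanced, then the solution of x(t+1) = Px(t) converges to zero for every initial condition. -/
/-!
Let `Sₜ(i) = ∑ⱼ |(Pᵗ)ᵢⱼ| ≤ 1`. A row with `Sₜ(i) < 1` keeps this defect (positive diagonal) and
passes it to every agent reading it; through the spanning tree all rows become defective once one
row of the first block is, and then `‖P^N‖_∞ < 1` forces `Pᵗ → 0`.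

If no row of the first block ever became defective, `|P₁₁ᵗ|` would stay row-stochastic, so the
products `P₁₁ * P₁₁ᵗ` never cancel: every nonzero term of an entry has the sign of that entry.
Irreducibility and the positive diagonal make some power `P₁₁^T` free of zero entries, and then
`sign (P₁₁)ᵢⱼ = sign (P₁₁^T)ᵢᵢ₀ · sign (P₁₁^T)ⱼᵢ₀` along every edge: the signs of a column of
`P₁₁^T` would be a balanced bipartition.
-/

open Matrix Filter

open Finset

section OrderedRing

variable {R κ : Type*} [CommRing R] [LinearOrder R] [IsStrictOrderedRing R]

theorem pos_mul_sum_of_abs_sum_eq_sum_abs {s : Finset κ} {c : κ → R}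
    (h : |∑ l ∈ s, c l| = ∑ l ∈ s, |c l|) {k : κ} (hk : k ∈ s) (hck : c k ≠ 0) :
    0 < c k * ∑ l ∈ s, c l := by
  rcases lt_trichotomy (∑ l ∈ s, c l) 0 with hneg | hzero | hpos
  · have hsum : ∑ l ∈ s, -|c l| = ∑ l ∈ s, c l := by
      rw [sum_neg_distrib, ← h, abs_of_neg hneg, neg_neg]
    have hck' : c k = -|c k| :=
      ((sum_eq_sum_iff_of_le fun l _ => neg_abs_le (c l)).1 hsum k hk).symm
    exact mul_pos_of_neg_of_neg (hck' ▸ neg_neg_of_pos (abs_pos.2 hck)) hneg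
  · rw [hzero, abs_zero, eq_comm, sum_eq_zero_iff_of_nonneg fun l _ => abs_nonneg (c l)] at h
    exact absurd (abs_eq_zero.1 (h k hk)) hck
  · have hsum : ∑ l ∈ s, c l = ∑ l ∈ s, |c l| := by rw [← h, abs_of_pos hpos]
    have hck' : c k = |c k| := (sum_eq_sum_iff_of_le fun l _ => le_abs_self (c l)).1 hsum k hk
    exact mul_pos (hck' ▸ abs_pos.2 hck) hpos

theorem pos_iff_pos_iff_pos_of_mul_pos {a b p : R} (ha : a ≠ 0) (hb : b ≠ 0) (h : 0 < a * b * p) :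
    ((0 < a ↔ 0 < b) ↔ 0 < p) := by
  rw [← pos_iff_pos_of_mul_pos h]
  rcases ha.lt_or_gt with ha | ha <;> rcases hb.lt_or_gt with hb | hb
  · exact iff_of_true (iff_of_false ha.not_gt hb.not_gt) (mul_pos_of_neg_of_neg ha hb)
  · exact iff_of_false (fun h => ha.not_gt (h.2 hb)) (mul_neg_of_neg_of_pos ha hb).not_gt
  · exact iff_of_false (fun h => hb.not_gt (h.1 ha)) (mul_neg_of_pos_of_neg ha hb).not_gt
  · exact iff_of_true (iff_of_true ha hb) (mul_pos ha hb)

end OrderedRing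

theorem tendsto_pow_atTop_nhds_zero_of_norm_pow_lt_one {R : Type*} [SeminormedRing R]
    [NormOneClass R] {x : R} (hx : ‖x‖ ≤ 1) {N : ℕ} (hN : ‖x ^ N‖ < 1) :
    Tendsto (fun t => x ^ t) atTop (nhds 0) := by
  have hN0 : N ≠ 0 := by rintro rfl; simp at hN
  have hbound : ∀ t, ‖x ^ t‖ ≤ ‖x ^ N‖ ^ (t / N) := fun t => calc
    ‖x ^ t‖ = ‖(x ^ N) ^ (t / N) * x ^ (t % N)‖ := by rw [← pow_mul, ← pow_add, Nat.div_add_mod]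
    _ ≤ ‖x ^ N‖ ^ (t / N) * ‖x‖ ^ (t % N) :=
      (norm_mul_le _ _).trans (mul_le_mul (norm_pow_le _ _) (norm_pow_le _ _) (norm_nonneg _)
        (pow_nonneg (norm_nonneg _) _))
    _ ≤ ‖x ^ N‖ ^ (t / N) :=
      mul_le_of_le_one_right (pow_nonneg (norm_nonneg _) _) (pow_le_one₀ (norm_nonneg _) hx)
  refine squeeze_zero_norm hbound ?_
  exact (tendsto_pow_atTop_nhds_zero_of_lt_one (norm_nonneg _) hN).comp
    (Nat.tendsto_div_const_atTop hN0)

namespace Matrix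

variable {ι l m n : Type*}

/-- `j → i` is an edge of the signed graph `G(A)` when `A i j ≠ 0`: agent `i` reads agent `j`. -/
def graphAdj (A : Matrix ι ι ℝ) (j i : ι) : Prop := i ≠ j ∧ A i j ≠ 0

def IsStructurallyBalanced (A : Matrix ι ι ℝ) : Prop :=
  ∃ f : ι → Bool, ∀ i j, i ≠ j → A i j ≠ 0 → (f i = f j ↔ 0 < A i j)

theorem reflTransGen_graphAdj_inl {P : Matrix (m ⊕ n) (m ⊕ n) ℝ} {a b : m}
    (h : Relation.ReflTransGen P.toBlocks₁₁.graphAdj a b) :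
    Relation.ReflTransGen P.graphAdj (Sum.inl a) (Sum.inl b) :=
  h.lift Sum.inl fun _ _ hab => ⟨fun h => hab.1 (Sum.inl_injective h), hab.2⟩

variable [Fintype ι] [Fintype m] [Fintype n]

def absRowSum (A : Matrix m n ℝ) (i : m) : ℝ := ∑ j, |A i j|

theorem absRowSum_one [DecidableEq ι] (i : ι) : absRowSum (1 : Matrix ι ι ℝ) i = 1 := by
  simp [absRowSum, one_apply, apply_ite]

theorem absRowSum_mul_le (A : Matrix l m ℝ) (B : Matrix m n ℝ) (i : l) :
    absRowSum (A * B) i ≤ ∑ k, |A i k| * absRowSum B k := calc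
  absRowSum (A * B) i ≤ ∑ j, ∑ k, |A i k * B k j| :=
    sum_le_sum fun j _ => abs_sum_le_sum_abs _ _
  _ = ∑ k, |A i k| * absRowSum B k := by
    rw [sum_comm]
    simp only [absRowSum, mul_sum, abs_mul]

section Substochastic

variable {P : Matrix ι ι ℝ}

theorem absRowSum_mul_le_one (hP : ∀ i, absRowSum P i ≤ 1) {B : Matrix ι n ℝ}
    (hB : ∀ k, absRowSum B k ≤ 1) (i : ι) :
    absRowSum (P * B) i ≤ 1 := calc
  absRowSum (P * B) i ≤ ∑ k, |P i k| * absRowSum B k := absRowSum_mul_le P B i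
  _ ≤ ∑ k, |P i k| := sum_le_sum fun k _ => mul_le_of_le_one_right (abs_nonneg _) (hB k)
  _ ≤ 1 := hP i

theorem absRowSum_mul_lt_one (hP : ∀ i, absRowSum P i ≤ 1) {B : Matrix ι n ℝ}
    (hB : ∀ k, absRowSum B k ≤ 1) {i k : ι} (hik : P i k ≠ 0) (hk : absRowSum B k < 1) :
    absRowSum (P * B) i < 1 := calc
  absRowSum (P * B) i ≤ ∑ k, |P i k| * absRowSum B k := absRowSum_mul_le P B i
  _ < ∑ k, |P i k| :=
    sum_lt_sum (fun k _ => mul_le_of_le_one_right (abs_nonneg _) (hB k))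
      ⟨k, mem_univ k, mul_lt_of_lt_one_right (abs_pos.2 hik) hk⟩
  _ ≤ 1 := hP i

variable [DecidableEq ι]

theorem absRowSum_pow_le_one (hP : ∀ i, absRowSum P i ≤ 1) (t : ℕ) (i : ι) :
    absRowSum (P ^ t) i ≤ 1 := by
  induction t generalizing i with
  | zero => exact (absRowSum_one i).le
  | succ t ih => rw [pow_succ']; exact absRowSum_mul_le_one hP ih i

theorem absRowSum_pow_succ_lt_one (hP : ∀ i, absRowSum P i ≤ 1) {t : ℕ} {i k : ι}
    (hik : P i k ≠ 0) (hk : absRowSum (P ^ t) k < 1) : absRowSum (P ^ (t + 1)) i < 1 := by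
  rw [pow_succ']
  exact absRowSum_mul_lt_one hP (absRowSum_pow_le_one hP t) hik hk

theorem eventually_absRowSum_pow_lt_one (hP : ∀ i, absRowSum P i ≤ 1) (hdiag : ∀ i, P i i ≠ 0)
    {a b : ι} (hab : Relation.ReflTransGen P.graphAdj a b) {t : ℕ} (ha : absRowSum (P ^ t) a < 1) :
    ∀ᶠ s in atTop, absRowSum (P ^ s) b < 1 := by
  obtain ⟨s₀, hs₀⟩ : ∃ s, absRowSum (P ^ s) b < 1 := by
    induction hab with
    | refl => exact ⟨t, ha⟩
    | tail _ hbc ih =>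
      obtain ⟨s, hs⟩ := ih
      exact ⟨s + 1, absRowSum_pow_succ_lt_one hP hbc.2 hs⟩
  refine eventually_atTop.2 ⟨s₀, fun s hs => ?_⟩
  induction s, hs using Nat.le_induction with
  | base => exact hs₀
  | succ s _ ih => exact absRowSum_pow_succ_lt_one hP (hdiag b) ih

end Substochastic

section LinftyOp

attribute [local instance] Matrix.linftyOpNormedAddCommGroup Matrix.linftyOpNormedRing

theorem linfty_opNorm_le_one_iff (A : Matrix m n ℝ) : ‖A‖ ≤ 1 ↔ ∀ i, absRowSum A i ≤ 1 := by
  rw [← coe_nnnorm, NNReal.coe_le_one, linfty_opNNNorm_def, Finset.sup_le_iff]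
  simp only [mem_univ, true_implies, absRowSum, ← NNReal.coe_le_one, NNReal.coe_sum, coe_nnnorm,
    Real.norm_eq_abs]

theorem linfty_opNorm_lt_one_iff (A : Matrix m n ℝ) : ‖A‖ < 1 ↔ ∀ i, absRowSum A i < 1 := by
  rw [← coe_nnnorm, NNReal.coe_lt_one, linfty_opNNNorm_def, Finset.sup_lt_iff zero_lt_one]
  simp only [mem_univ, true_implies, absRowSum, ← NNReal.coe_lt_one, NNReal.coe_sum, coe_nnnorm,
    Real.norm_eq_abs]

theorem tendsto_pow_mulVec_atTop_nhds_zero [DecidableEq ι] [Nonempty ι] {P : Matrix ι ι ℝ}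
    (hP : ∀ i, absRowSum P i ≤ 1) {N : ℕ} (hN : ∀ i, absRowSum (P ^ N) i < 1) (x : ι → ℝ) :
    Tendsto (fun t => P ^ t *ᵥ x) atTop (nhds 0) := by
  have hpow := tendsto_pow_atTop_nhds_zero_of_norm_pow_lt_one
    ((linfty_opNorm_le_one_iff P).2 hP) ((linfty_opNorm_lt_one_iff _).2 hN)
  refine squeeze_zero_norm (fun t => linfty_opNorm_mulVec (P ^ t) x) ?_
  simpa using (tendsto_zero_iff_norm_tendsto_zero.1 hpow).mul_const ‖x‖

end LinftyOp

section SignCoherence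

variable [DecidableEq ι] {A : Matrix ι ι ℝ}

theorem abs_pow_succ_apply (hrow : ∀ t i, absRowSum (A ^ t) i = 1) (t : ℕ) (i j : ι) :
    |(A ^ (t + 1)) i j| = ∑ k, |A i k * (A ^ t) k j| := by
  have hle : ∀ j, |(A ^ (t + 1)) i j| ≤ ∑ k, |A i k * (A ^ t) k j| := fun j => by
    rw [pow_succ', mul_apply]
    exact abs_sum_le_sum_abs _ _
  have hsum : ∑ j, |(A ^ (t + 1)) i j| = ∑ j, ∑ k, |A i k * (A ^ t) k j| := calc
    ∑ j, |(A ^ (t + 1)) i j| = 1 := hrow (t + 1) i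
    _ = ∑ k, |A i k| * absRowSum (A ^ t) k := by
      simp only [hrow, mul_one]
      exact (pow_one A ▸ hrow 1 i).symm
    _ = ∑ j, ∑ k, |A i k * (A ^ t) k j| := by
      rw [sum_comm]
      simp only [absRowSum, mul_sum, abs_mul]
  exact (sum_eq_sum_iff_of_le fun j _ => hle j).1 hsum j (mem_univ j)

theorem pos_mul_pow_succ_apply (hrow : ∀ t i, absRowSum (A ^ t) i = 1) {t : ℕ} {i j k : ι}
    (h : A i k * (A ^ t) k j ≠ 0) :
    0 < A i k * (A ^ t) k j * (A ^ (t + 1)) i j := by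
  have hsum : (A ^ (t + 1)) i j = ∑ l, A i l * (A ^ t) l j := by rw [pow_succ', mul_apply]
  have habs := abs_pow_succ_apply hrow t i j
  rw [hsum] at habs ⊢
  exact pos_mul_sum_of_abs_sum_eq_sum_abs habs (mem_univ k) h

theorem pow_succ_apply_ne_zero (hrow : ∀ t i, absRowSum (A ^ t) i = 1) {t : ℕ} {i j k : ι}
    (hik : A i k ≠ 0) (hkj : (A ^ t) k j ≠ 0) :
    (A ^ (t + 1)) i j ≠ 0 :=
  right_ne_zero_of_mul (pos_mul_pow_succ_apply hrow (mul_ne_zero hik hkj)).ne'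

theorem eventually_pow_apply_ne_zero (hrow : ∀ t i, absRowSum (A ^ t) i = 1)
    (hdiag : ∀ i, 0 < A i i) (hirr : StronglyConnected A.graphAdj) :
    ∀ᶠ t in atTop, ∀ i j, (A ^ t) i j ≠ 0 := by
  simp only [eventually_all]
  intro i j
  obtain ⟨t, ht⟩ : ∃ t, (A ^ t) i j ≠ 0 := by
    induction hirr j i with
    | refl => exact ⟨0, by simp⟩
    | tail _ hbc ih =>
      obtain ⟨t, ht⟩ := ih
      exact ⟨t + 1, pow_succ_apply_ne_zero hrow hbc.2 ht⟩
  refine eventually_atTop.2 ⟨t, fun s hs => ?_⟩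
  induction s, hs using Nat.le_induction with
  | base => exact ht
  | succ s _ ih => exact pow_succ_apply_ne_zero hrow (hdiag i).ne' ih

theorem isStructurallyBalanced_of_absRowSum_pow_eq_one (hrow : ∀ t i, absRowSum (A ^ t) i = 1)
    (hdiag : ∀ i, 0 < A i i) (hirr : StronglyConnected A.graphAdj) :
    A.IsStructurallyBalanced := by
  cases isEmpty_or_nonempty ι with
  | inl _ => exact ⟨fun _ => true, fun i => isEmptyElim i⟩
  | inr hne =>
    obtain ⟨i₀⟩ := hne
    obtain ⟨T, hT⟩ := (eventually_pow_apply_ne_zero hrow hdiag hirr).exists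
    refine ⟨fun i => decide (0 < (A ^ T) i i₀), fun i j _ hij => ?_⟩
    have hi := pos_mul_pow_succ_apply hrow (mul_ne_zero (hdiag i).ne' (hT i i₀))
    have hj := pos_mul_pow_succ_apply hrow (mul_ne_zero hij (hT j i₀))
    rw [mul_assoc] at hi
    have hsame : 0 < (A ^ T) i i₀ * (A ^ (T + 1)) i i₀ := pos_of_mul_pos_right hi (hdiag i).le
    have hsign : 0 < (A ^ T) i i₀ * (A ^ T) j i₀ * A i j := by
      refine pos_of_mul_pos_left (b := (A ^ (T + 1)) i i₀ ^ 2) ?_ (sq_nonneg _)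
      convert mul_pos hsame hj using 1
      ring
    simpa only [decide_eq_decide] using pos_iff_pos_iff_pos_of_mul_pos (hT i i₀) (hT j i₀) hsign

end SignCoherence

section LowerBlockTriangular

variable [DecidableEq m] [DecidableEq n] {P : Matrix (m ⊕ n) (m ⊕ n) ℝ}

theorem pow_inl_inr_eq_zero (hP : ∀ i j, P (Sum.inl i) (Sum.inr j) = 0)
    (t : ℕ) (i : m) (j : n) : (P ^ t) (Sum.inl i) (Sum.inr j) = 0 := by
  induction t generalizing j with
  | zero => simp
  | succ t ih => simp [pow_succ, mul_apply, Fintype.sum_sum_type, ih, hP]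

theorem pow_inl_inl (hP : ∀ i j, P (Sum.inl i) (Sum.inr j) = 0)
    (t : ℕ) (i j : m) : (P ^ t) (Sum.inl i) (Sum.inl j) = (P.toBlocks₁₁ ^ t) i j := by
  induction t generalizing i with
  | zero => simp [one_apply]
  | succ t ih => simp [pow_succ', mul_apply, Fintype.sum_sum_type, ih, hP, toBlocks₁₁]

theorem absRowSum_pow_inl (hP : ∀ i j, P (Sum.inl i) (Sum.inr j) = 0) (t : ℕ) (i : m) :
    absRowSum (P ^ t) (Sum.inl i) = absRowSum (P.toBlocks₁₁ ^ t) i := by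
  simp [absRowSum, Fintype.sum_sum_type, pow_inl_inl hP, pow_inl_inr_eq_zero hP]

end LowerBlockTriangular

end Matrix

theorem stmt10 {r m : ℕ}
    (P : Matrix (Fin r ⊕ Fin m) (Fin r ⊕ Fin m) ℝ)
    -- block lower-triangular form: P₁₂ = 0
    (hblock : ∀ (i : Fin r) (j : Fin m), P (Sum.inl i) (Sum.inr j) = 0)
    -- |P| row-stochastic, positive diagonal
    (habs : ∀ i, ∑ j, |P i j| = 1) (hdiag : ∀ i, 0 < P i i)
    -- P₁₁ irreducible, i.e. G(P₁₁) strongly connected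
    (hirr : StronglyConnected (fun j i : Fin r =>
      i ≠ j ∧ P (Sum.inl i) (Sum.inl j) ≠ 0))
    -- G(P) contains a spanning tree rooted in the vertex set of G(P₁₁)
    (htree : ∃ u : Fin r, ∀ v : Fin r ⊕ Fin m,
      Relation.ReflTransGen (fun j i => i ≠ j ∧ P i j ≠ 0) (Sum.inl u) v)
    -- G(P₁₁) structurally unbalanced
    (hUnbal : ¬ ∃ f : Fin r → Bool, ∀ i j, i ≠ j →
      P (Sum.inl i) (Sum.inl j) ≠ 0 → (f i = f j ↔ 0 < P (Sum.inl i) (Sum.inl j))) :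
    ∀ x0 : Fin r ⊕ Fin m → ℝ, Tendsto (fun t => P ^ t *ᵥ x0) atTop (nhds 0) := by
  have hsub : ∀ i, absRowSum P i ≤ 1 := fun i => (habs i).le
  obtain ⟨t, u, hu⟩ : ∃ t u, absRowSum (P ^ t) (Sum.inl u) < 1 := by
    by_contra! hfull
    refine hUnbal (isStructurallyBalanced_of_absRowSum_pow_eq_one (A := P.toBlocks₁₁)
      (fun t i => ?_) (fun i => hdiag (Sum.inl i)) hirr)
    rw [← absRowSum_pow_inl hblock]
    exact (absRowSum_pow_le_one hsub t _).antisymm (hfull t i)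
  obtain ⟨u₀, hu₀⟩ := htree
  have hdefect : ∀ v, ∀ᶠ s in atTop, absRowSum (P ^ s) v < 1 := fun v =>
    eventually_absRowSum_pow_lt_one hsub (fun i => (hdiag i).ne')
      ((reflTransGen_graphAdj_inl (hirr u u₀)).trans (hu₀ v)) hu
  obtain ⟨N, hN⟩ := (eventually_all.2 hdefect).exists
  have : Nonempty (Fin r ⊕ Fin m) := ⟨Sum.inl u⟩
  exact tendsto_pow_mulVec_atTop_nhds_zero hsub hN
end

section
/- Let (P(t))_{t≥0} be matrices with positive diagonals, |P(t)| row-stochastic, and nonzero entries bounded below in modulus by γ > 0. Assume there exists an infinite sequence of uniformly bounded intervals [t_i, t_{i+1}) such that over each interval the union of the graphs G(P(t)) is strongly connected and there is NO bipartition of the vertex set (allowing one empty part) such that for each graph in the interval all edges between the parts are negative and all edges within parts are positive. Then every solution of x(t+1) = P(t)x(t) converges to the zero vector. -/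
/-!
Stack `x` and `-x` into `y` on two copies of the vertex set: `y` evolves by the nonnegative
row-stochastic matrix `Q = [[P⁺, P⁻], [P⁻, P⁺]]`, whose positive entries are still `≥ γ`. If
the union graph of `Q` over a window were not strongly connected, some vertex could not reach
its own copy, and the copy of each vertex reachable from a fixed root would be a bipartition of
the kind excluded by hypothesis. In a strongly connected window, a vertex with
`y ≥ a + e` (where `a` bounds `y` below) passes `y ≥ a + γ^ℓ e` on to a new vertex, so after
`2N - 1` windows `y ≥ -‖x‖ + γ^L ‖x‖` everywhere. As `y` contains both `x` and `-x`, the sup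
norm of `x` is nonincreasing and shrinks by the factor `1 - γ^L` over every `2N - 1` windows.
-/

open Matrix Filter

def traj {N : ℕ} (P : ℕ → Matrix (Fin N) (Fin N) ℝ) (x0 : Fin N → ℝ) :
    ℕ → Fin N → ℝ
  | 0 => x0
  | t + 1 => P t *ᵥ traj P x0 t

open Finset Relation

theorem Relation.ReflTransGen.exists_exit {α : Type*} {r : α → α → Prop} {p : α → Prop}
    {a b : α} (h : ReflTransGen r a b) (ha : p a) (hb : ¬ p b) :
    ∃ u v, p u ∧ ¬ p v ∧ r u v := by
  induction h with
  | refl => exact absurd ha hb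
  | @tail c _ _ hcb ih =>
    by_cases hc : p c
    · exact ⟨c, _, hc, hb, hcb⟩
    · exact ih hc

theorem Fintype.forall_of_exists_of_grows {ι : Type*} [Fintype ι] {p : ℕ → ι → Prop}
    (h0 : ∃ v, p 0 v) (hmono : ∀ n v, p n v → p (n + 1) v)
    (hgrow : ∀ n, (∃ v, ¬ p n v) → ∃ v, ¬ p n v ∧ p (n + 1) v) (v : ι) :
    p (Fintype.card ι - 1) v := by
  classical
  have key : ∀ n, (∀ v, p n v) ∨ n + 1 ≤ #{v | p n v} := by
    intro n
    induction n with
    | zero => exact .inr (Finset.card_pos.2 (h0.imp fun v hv => by simpa using hv))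
    | succ n ih =>
      by_cases hall : ∀ v, p n v
      · exact .inl fun v => hmono n v (hall v)
      obtain ⟨u, hun, hu⟩ := hgrow n (not_forall.1 hall)
      have hsub : univ.filter (p n) ⊆ univ.filter (p (n + 1)) := fun v hv => by
        simpa using hmono n v (by simpa using hv)
      have hlt : #{v | p n v} < #{v | p (n + 1) v} :=
        card_lt_card <| (ssubset_iff_of_subset hsub).2 ⟨u, by simpa using hu, by simpa using hun⟩
      have := ih.resolve_left hall
      exact .inr (by omega)
  obtain ⟨w, -⟩ := h0
  refine (key _).elim (fun h => h v) fun h => ?_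
  have hcard : #{v | p (Fintype.card ι - 1) v} = Fintype.card ι :=
    le_antisymm (card_le_univ _) (by have := Fintype.card_pos_iff.2 ⟨w⟩; omega)
  simpa using eq_univ_iff_forall.1 (eq_univ_of_card _ hcard) v

theorem Nat.sub_le_mul_of_sub_succ_le {f : ℕ → ℕ} (hf : Monotone f) {B : ℕ}
    (h : ∀ k, f (k + 1) - f k ≤ B) (k n : ℕ) : f (k + n) - f k ≤ n * B := by
  induction n with
  | zero => simp
  | succ n ih =>
    have := h (k + n)
    have := hf (k.le_add_right n)
    rw [← add_assoc, Nat.succ_mul]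
    omega

theorem tendsto_zero_of_antitone_of_le_mul {u : ℕ → ℝ} (hu : Antitone u) (hu0 : ∀ t, 0 ≤ u t)
    {s : ℕ → ℕ} (hs : Tendsto s atTop atTop) {ρ : ℝ} (hρ0 : 0 ≤ ρ) (hρ1 : ρ < 1)
    (hcontr : ∀ n, u (s (n + 1)) ≤ ρ * u (s n)) : Tendsto u atTop (nhds 0) := by
  have hgeom : ∀ n, u (s n) ≤ ρ ^ n * u (s 0) := by
    intro n
    induction n with
    | zero => simp
    | succ n ih => calc
        u (s (n + 1)) ≤ ρ * u (s n) := hcontr n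
        _ ≤ ρ * (ρ ^ n * u (s 0)) := by gcongr
        _ = ρ ^ (n + 1) * u (s 0) := by ring
  have hsub : Tendsto (u ∘ s) atTop (nhds 0) :=
    squeeze_zero (fun n => hu0 _) hgeom
      (by simpa using (tendsto_pow_atTop_nhds_zero_of_lt_one hρ0 hρ1).mul_const (u (s 0)))
  have hinf := tendsto_atTop_ciInf hu ⟨0, by rintro _ ⟨t, rfl⟩; exact hu0 t⟩
  rwa [tendsto_nhds_unique (hinf.comp hs) hsub] at hinf

variable {ι : Type*}

def unionGraph {R : Type*} [Zero R] (A : ℕ → Matrix ι ι R) (T T' : ℕ) (j i : ι) : Prop :=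
  ∃ s, T ≤ s ∧ s < T' ∧ A s i j ≠ 0

structure IsUniformlyStochastic [Fintype ι] [DecidableEq ι] (A : Matrix ι ι ℝ) (γ : ℝ) :
    Prop where
  mem_rowStochastic : A ∈ rowStochastic ℝ ι
  le_of_ne_zero : ∀ i j, A i j ≠ 0 → γ ≤ A i j
  diag_ne_zero : ∀ i, A i i ≠ 0

namespace IsUniformlyStochastic

variable [Fintype ι] [DecidableEq ι] {A : Matrix ι ι ℝ} {γ : ℝ}

theorem le_one [Nonempty ι] (hA : IsUniformlyStochastic A γ) : γ ≤ 1 := by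
  obtain ⟨i⟩ := ‹Nonempty ι›
  exact (hA.le_of_ne_zero i i (hA.diag_ne_zero i)).trans
    (le_one_of_mem_rowStochastic hA.mem_rowStochastic)

theorem add_mul_le_mulVec (hA : IsUniformlyStochastic A γ) {x : ι → ℝ} {a d : ℝ} {v w : ι}
    (hd : 0 ≤ d) (hx : ∀ u, a ≤ x u) (hw : a + d ≤ x w) (hvw : A v w ≠ 0) :
    a + γ * d ≤ (A *ᵥ x) v := by
  have hAnonneg : ∀ u, 0 ≤ A v u := fun u => nonneg_of_mem_rowStochastic hA.mem_rowStochastic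
  have hsplit : (A *ᵥ x) v = a + ∑ u, A v u * (x u - a) := by
    simp only [mulVec, dotProduct, mul_sub, sum_sub_distrib, ← sum_mul,
      sum_row_of_mem_rowStochastic hA.mem_rowStochastic, one_mul]
    ring
  rw [hsplit]
  calc a + γ * d ≤ a + A v w * (x w - a) := by
        gcongr
        · exact hAnonneg w
        · exact hA.le_of_ne_zero v w hvw
        · linarith
    _ ≤ a + ∑ u, A v u * (x u - a) := by
        gcongr
        exact single_le_sum (fun u _ => mul_nonneg (hAnonneg u) (sub_nonneg.2 (hx u)))
          (mem_univ w)

theorem le_mulVec (hA : IsUniformlyStochastic A γ) {x : ι → ℝ} {a : ℝ} (hx : ∀ u, a ≤ x u)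
    (v : ι) : a ≤ (A *ᵥ x) v := by
  simpa using hA.add_mul_le_mulVec le_rfl hx (by simpa using hx v) (hA.diag_ne_zero v)

end IsUniformlyStochastic

section Trajectory

variable [Fintype ι] [DecidableEq ι] {A : ℕ → Matrix ι ι ℝ} {γ a e : ℝ} {y : ℕ → ι → ℝ}
  {t₀ : ℕ}

theorem forall_le_traj_of_le (hA : ∀ t, IsUniformlyStochastic (A t) γ)
    (hy : ∀ t, y (t + 1) = A t *ᵥ y t) {t : ℕ} (ht : t₀ ≤ t) (hlow : ∀ u, a ≤ y t₀ u) :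
    ∀ u, a ≤ y t u := by
  induction t, ht using Nat.le_induction with
  | base => exact hlow
  | succ t _ ih => exact fun u => hy t ▸ (hA t).le_mulVec ih u

theorem add_pow_mul_le_traj_succ (hA : ∀ t, IsUniformlyStochastic (A t) γ)
    (hy : ∀ t, y (t + 1) = A t *ᵥ y t) (hγ : 0 ≤ γ) (he : 0 ≤ e) (hlow : ∀ u, a ≤ y t₀ u)
    {t : ℕ} (ht : t₀ ≤ t) {v w : ι} (hw : a + γ ^ (t - t₀) * e ≤ y t w) (hvw : A t v w ≠ 0) :
    a + γ ^ (t + 1 - t₀) * e ≤ y (t + 1) v := by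
  rw [Nat.sub_add_comm ht, pow_succ', mul_assoc, hy]
  exact (hA t).add_mul_le_mulVec (by positivity) (forall_le_traj_of_le hA hy ht hlow) hw hvw

theorem add_pow_mul_le_traj_of_le (hA : ∀ t, IsUniformlyStochastic (A t) γ)
    (hy : ∀ t, y (t + 1) = A t *ᵥ y t) (hγ : 0 ≤ γ) (he : 0 ≤ e) (hlow : ∀ u, a ≤ y t₀ u)
    {t t' : ℕ} (ht : t₀ ≤ t) (htt' : t ≤ t') {v : ι} (hv : a + γ ^ (t - t₀) * e ≤ y t v) :
    a + γ ^ (t' - t₀) * e ≤ y t' v := by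
  induction t', htt' using Nat.le_induction with
  | base => exact hv
  | succ t' htt' ih =>
    exact add_pow_mul_le_traj_succ hA hy hγ he hlow (ht.trans htt') ih ((hA t').diag_ne_zero v)

theorem exists_add_pow_mul_le_traj (hA : ∀ t, IsUniformlyStochastic (A t) γ)
    (hy : ∀ t, y (t + 1) = A t *ᵥ y t) (hγ : 0 ≤ γ) (he : 0 ≤ e) (hlow : ∀ u, a ≤ y t₀ u)
    {T T' : ℕ} (hT : t₀ ≤ T) (hsc : StronglyConnected (unionGraph A T T')) {v w : ι}
    (hw : a + γ ^ (T - t₀) * e ≤ y T w) (hv : ¬ a + γ ^ (T - t₀) * e ≤ y T v) :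
    ∃ u, ¬ a + γ ^ (T - t₀) * e ≤ y T u ∧ a + γ ^ (T' - t₀) * e ≤ y T' u := by
  obtain ⟨u₀, u, hu₀, hu, s, hTs, hsT', hA₀⟩ :=
    (hsc w v).exists_exit (p := fun u => a + γ ^ (T - t₀) * e ≤ y T u) hw hv
  have hu₀s := add_pow_mul_le_traj_of_le hA hy hγ he hlow hT hTs hu₀
  have hus := add_pow_mul_le_traj_succ hA hy hγ he hlow (hT.trans hTs) hu₀s hA₀
  exact ⟨u, hu, add_pow_mul_le_traj_of_le hA hy hγ he hlow (by omega) hsT' hus⟩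

theorem forall_add_pow_mul_le_traj (hA : ∀ t, IsUniformlyStochastic (A t) γ)
    (hy : ∀ t, y (t + 1) = A t *ᵥ y t) (hγ : 0 ≤ γ) (he : 0 ≤ e) {ts : ℕ → ℕ}
    (hts : Monotone ts) (hsc : ∀ k, StronglyConnected (unionGraph A (ts k) (ts (k + 1))))
    (hlow : ∀ u, a ≤ y (ts 0) u) {w : ι} (hw : a + e ≤ y (ts 0) w) (v : ι) :
    a + γ ^ (ts (Fintype.card ι - 1) - ts 0) * e ≤ y (ts (Fintype.card ι - 1)) v := by
  have hts₀ : ∀ n, ts 0 ≤ ts n := fun n => hts n.zero_le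
  have hmono : ∀ n u, a + γ ^ (ts n - ts 0) * e ≤ y (ts n) u →
      a + γ ^ (ts (n + 1) - ts 0) * e ≤ y (ts (n + 1)) u := fun n u =>
    add_pow_mul_le_traj_of_le hA hy hγ he hlow (hts₀ n) (hts n.le_succ)
  have hw' : ∀ n, a + γ ^ (ts n - ts 0) * e ≤ y (ts n) w := fun n => by
    induction n with
    | zero => simpa using hw
    | succ n ih => exact hmono n w ih
  refine Fintype.forall_of_exists_of_grows ⟨w, hw' 0⟩ hmono (fun n ⟨u, hu⟩ => ?_) v
  exact exists_add_pow_mul_le_traj hA hy hγ he hlow (hts₀ n) (hsc n) (hw' n) hu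

end Trajectory

section SignedLift

/-- The paper's `Q = [[P⁺, P⁻], [P⁻, P⁺]]`, the block index being the `Bool` coordinate;
`liftVec x` stacks `x` (on `true`) and `-x` (on `false`). -/
def signedLift (P : Matrix ι ι ℝ) : Matrix (ι × Bool) (ι × Bool) ℝ :=
  of fun v w => if v.2 = w.2 then (P v.1 w.1)⁺ else (P v.1 w.1)⁻

def liftVec (x : ι → ℝ) (v : ι × Bool) : ℝ :=
  if v.2 then x v.1 else -x v.1

theorem signedLift_flip (P : Matrix ι ι ℝ) (v w : ι × Bool) :
    signedLift P (v.1, !v.2) (w.1, !w.2) = signedLift P v w := by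
  simp [signedLift]

theorem signedLift_ne_zero_iff {P : Matrix ι ι ℝ} {i j : ι} {b c : Bool} :
    signedLift P (i, b) (j, c) ≠ 0 ↔ P i j ≠ 0 ∧ (b = c ↔ 0 < P i j) := by
  rcases lt_trichotomy (P i j) 0 with h | h | h <;> by_cases hbc : b = c
  all_goals first
    | simp [signedLift, hbc, h, h.le, h.ne, not_lt.2 h.le]
    | simp [signedLift, hbc, h]

theorem signedLift_mulVec_liftVec [Fintype ι] (P : Matrix ι ι ℝ) (x : ι → ℝ) :
    signedLift P *ᵥ liftVec x = liftVec (P *ᵥ x) := by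
  ext ⟨i, b⟩
  have hP : ∀ j, (P i j)⁺ - (P i j)⁻ = P i j := fun j => posPart_sub_negPart _
  cases b <;>
    simp only [signedLift, liftVec, mulVec, dotProduct, Fintype.sum_prod_type, Fintype.sum_bool,
      of_apply, ← sum_neg_distrib] <;>
    refine sum_congr rfl fun j _ => ?_ <;> simp
  · linear_combination -(hP j) * x j
  · linear_combination (hP j) * x j

theorem isUniformlyStochastic_signedLift [Fintype ι] [DecidableEq ι] {P : Matrix ι ι ℝ}
    {γ : ℝ} (habs : ∀ i, ∑ j, |P i j| = 1) (hdiag : ∀ i, 0 < P i i)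
    (hlow : ∀ i j, P i j ≠ 0 → γ ≤ |P i j|) : IsUniformlyStochastic (signedLift P) γ := by
  refine ⟨mem_rowStochastic_iff_sum.2 ⟨?_, ?_⟩, ?_, ?_⟩
  · rintro ⟨i, b⟩ ⟨j, c⟩
    simp only [signedLift, of_apply]
    split_ifs <;> simp
  · rintro ⟨i, b⟩
    rw [Fintype.sum_prod_type, ← habs i]
    refine sum_congr rfl fun j _ => ?_
    cases b <;> simp [signedLift, negPart_add_posPart, posPart_add_negPart]
  · rintro ⟨i, b⟩ ⟨j, c⟩ h
    obtain ⟨hP, hbc⟩ := signedLift_ne_zero_iff.1 h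
    convert hlow i j hP using 1
    by_cases hpos : 0 < P i j
    · simp [signedLift, hbc.2 hpos, hpos.le, abs_of_pos hpos]
    · have hneg : P i j < 0 := lt_of_le_of_ne (not_lt.1 hpos) hP
      simp [signedLift, mt hbc.1 hpos, hneg.le, abs_of_neg hneg]
  · rintro ⟨i, b⟩
    simp [signedLift, (hdiag i).le, (hdiag i).ne']

theorem norm_le_iff_forall_neg_le_liftVec [Fintype ι] {x : ι → ℝ} {R : ℝ} (hR : 0 ≤ R) :
    ‖x‖ ≤ R ↔ ∀ v, -R ≤ liftVec x v := by
  simp [pi_norm_le_iff_of_nonneg hR, abs_le, liftVec, forall_and]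
  exact and_comm

end SignedLift

section LiftedGraph

def IsSignBalanced (P : ℕ → Matrix ι ι ℝ) (T T' : ℕ) (f : ι → Bool) : Prop :=
  ∀ s, T ≤ s → s < T' → ∀ i j, i ≠ j → P s i j ≠ 0 → (f i = f j ↔ 0 < P s i j)

variable {P : ℕ → Matrix ι ι ℝ} {T T' : ℕ}

theorem Bool.exists_eq_iff (c : Bool) (p : Prop) : ∃ b, (b = c ↔ p) := by
  by_cases hp : p
  · exact ⟨c, by simp [hp]⟩
  · exact ⟨!c, by simp [hp]⟩

theorem reflTransGen_signedLift_flip {v w : ι × Bool}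
    (h : ReflTransGen (unionGraph (signedLift ∘ P) T T') v w) :
    ReflTransGen (unionGraph (signedLift ∘ P) T T') (v.1, !v.2) (w.1, !w.2) :=
  ReflTransGen.lift (fun v => (v.1, !v.2))
    (fun _ _ ⟨s, h₁, h₂, h⟩ => ⟨s, h₁, h₂, by simpa [signedLift_flip] using h⟩) _ _ h

theorem exists_reflTransGen_signedLift {j i : ι} (h : ReflTransGen (unionGraph P T T') j i) :
    ∃ ε, ∀ b, ReflTransGen (unionGraph (signedLift ∘ P) T T') (j, b) (i, xor b ε) := by
  induction h with
  | refl => exact ⟨false, fun b => by simpa using ReflTransGen.refl⟩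
  | @tail k i _ hki ih =>
    obtain ⟨ε, hε⟩ := ih
    obtain ⟨s, h₁, h₂, hP⟩ := hki
    obtain ⟨ε', hε'⟩ := Bool.exists_eq_iff ε (0 < P s i k)
    refine ⟨ε', fun b => (hε b).tail ⟨s, h₁, h₂, signedLift_ne_zero_iff.2 ⟨hP, ?_⟩⟩⟩
    simpa using hε'

theorem stronglyConnected_signedLift_of_reflTransGen (hsc : StronglyConnected (unionGraph P T T'))
    {a : ι} (ha : ReflTransGen (unionGraph (signedLift ∘ P) T T') (a, true) (a, false)) :
    StronglyConnected (unionGraph (signedLift ∘ P) T T') := by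
  have hfib : ∀ b c, ReflTransGen (unionGraph (signedLift ∘ P) T T') (a, b) (a, c) := by
    have ha' := reflTransGen_signedLift_flip ha
    rintro (_ | _) (_ | _) <;> first | exact .refl | exact ha | exact ha'
  rintro ⟨i, b⟩ ⟨j, c⟩
  obtain ⟨δ, hδ⟩ := exists_reflTransGen_signedLift (hsc i a)
  obtain ⟨ε, hε⟩ := exists_reflTransGen_signedLift (hsc a j)
  simpa using (hδ b).trans ((hfib _ _).trans (hε (xor c ε)))

theorem exists_isSignBalanced (hsc : StronglyConnected (unionGraph P T T')) (r : ι)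
    (hno : ∀ a, ¬ ReflTransGen (unionGraph (signedLift ∘ P) T T') (a, true) (a, false)) :
    ∃ f, IsSignBalanced P T T' f := by
  -- the copy of `i` reachable from `(r, true)` is unique, and it is the bipartition
  have hfix : ∀ a b c, ReflTransGen (unionGraph (signedLift ∘ P) T T') (a, b) (a, c) → c = b := by
    rintro a (_ | _) (_ | _) h
    all_goals first
      | rfl
      | exact absurd h (hno a)
      | exact absurd (reflTransGen_signedLift_flip h) (hno a)
  have hreach : ∀ i, ∃ c, ReflTransGen (unionGraph (signedLift ∘ P) T T') (r, true) (i, c) :=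
    fun i => (exists_reflTransGen_signedLift (hsc r i)).elim fun _ h => ⟨_, h true⟩
  choose f hf using hreach
  have huniq : ∀ i c, ReflTransGen (unionGraph (signedLift ∘ P) T T') (r, true) (i, c) →
      c = f i := by
    intro i c h
    obtain ⟨δ, hδ⟩ := exists_reflTransGen_signedLift (hsc i r)
    have h₁ := hfix r true _ (h.trans (hδ c))
    have h₂ := hfix r true _ ((hf i).trans (hδ _))
    exact Bool.xor_left_inj.1 (h₁.trans h₂.symm)
  refine ⟨f, fun s h₁ h₂ i j _ hP => ?_⟩
  obtain ⟨c, hc⟩ := Bool.exists_eq_iff (f j) (0 < P s i j)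
  have hci := huniq i c ((hf j).tail ⟨s, h₁, h₂, signedLift_ne_zero_iff.2 ⟨hP, hc⟩⟩)
  rwa [hci] at hc

theorem stronglyConnected_signedLift (hsc : StronglyConnected (unionGraph P T T'))
    (hnb : ¬ ∃ f, IsSignBalanced P T T' f) :
    StronglyConnected (unionGraph (signedLift ∘ P) T T') := by
  by_cases h : ∃ a, ReflTransGen (unionGraph (signedLift ∘ P) T T') (a, true) (a, false)
  · obtain ⟨a, ha⟩ := h
    exact stronglyConnected_signedLift_of_reflTransGen hsc ha
  rcases isEmpty_or_nonempty ι with hι | ⟨⟨r⟩⟩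
  · exact fun v => isEmptyElim v.1
  · exact absurd (exists_isSignBalanced hsc r (not_exists.1 h)) hnb

end LiftedGraph

section Contraction

variable [Fintype ι] [DecidableEq ι] {γ : ℝ}

theorem norm_mulVec_le_of_signedLift {P : Matrix ι ι ℝ}
    (hQ : IsUniformlyStochastic (signedLift P) γ) (x : ι → ℝ) : ‖P *ᵥ x‖ ≤ ‖x‖ :=
  (norm_le_iff_forall_neg_le_liftVec (norm_nonneg x)).2 fun v => by
    rw [← signedLift_mulVec_liftVec]
    exact hQ.le_mulVec ((norm_le_iff_forall_neg_le_liftVec (norm_nonneg x)).1 le_rfl) v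

theorem norm_le_one_sub_pow_mul_norm {P : ℕ → Matrix ι ι ℝ} {x : ℕ → ι → ℝ} (hγ : 0 ≤ γ)
    (hQ : ∀ t, IsUniformlyStochastic (signedLift (P t)) γ) (hx : ∀ t, x (t + 1) = P t *ᵥ x t)
    {ts : ℕ → ℕ} (hts : Monotone ts)
    (hsc : ∀ k, StronglyConnected (unionGraph (signedLift ∘ P) (ts k) (ts (k + 1)))) :
    ‖x (ts (Fintype.card (ι × Bool) - 1))‖ ≤
      (1 - γ ^ (ts (Fintype.card (ι × Bool) - 1) - ts 0)) * ‖x (ts 0)‖ := by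
  rcases isEmpty_or_nonempty ι with hι | ⟨⟨i⟩⟩
  · simp [Subsingleton.elim (x _) 0]
  have : Nonempty ι := ⟨i⟩
  set R := ‖x (ts 0)‖
  have hlow := (norm_le_iff_forall_neg_le_liftVec (norm_nonneg (x (ts 0)))).1 le_rfl
  obtain ⟨w, hw⟩ : ∃ w, -R + R ≤ liftVec (x (ts 0)) w := by
    rcases le_total 0 (x (ts 0) i) with h | h
    · exact ⟨(i, true), by simpa [liftVec] using h⟩
    · exact ⟨(i, false), by simpa [liftVec] using h⟩
  have hraised := forall_add_pow_mul_le_traj (A := signedLift ∘ P) (y := fun t => liftVec (x t))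
    hQ (fun t => by rw [hx, Function.comp_apply, signedLift_mulVec_liftVec]) hγ (norm_nonneg _)
    hts hsc hlow hw
  have hγ1 : γ ^ (ts (Fintype.card (ι × Bool) - 1) - ts 0) ≤ 1 := pow_le_one₀ hγ (hQ 0).le_one
  rw [norm_le_iff_forall_neg_le_liftVec (mul_nonneg (by linarith) (norm_nonneg _))]
  intro v
  linarith [hraised v]

end Contraction

theorem stmt13_general {N : ℕ} (P : ℕ → Matrix (Fin N) (Fin N) ℝ) (γ : ℝ) (hγ : 0 < γ)
    (habs : ∀ t i, ∑ j, |P t i j| = 1) (hdiag : ∀ t i, 0 < P t i i)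
    (hlow : ∀ t i j, P t i j ≠ 0 → γ ≤ |P t i j|)
    (ts : ℕ → ℕ) (B : ℕ) (hmono : ∀ k, ts k < ts (k + 1))
    (hbdd : ∀ k, ts (k + 1) - ts k ≤ B)
    -- over each interval the union graph is strongly connected
    (hjoint : ∀ k, StronglyConnected (fun j i : Fin N =>
      ∃ s, ts k ≤ s ∧ s < ts (k + 1) ∧ i ≠ j ∧ P s i j ≠ 0))
    -- no bipartition (one part possibly empty) works simultaneously for all
    -- graphs of the interval
    (hnobal : ∀ k, ¬ ∃ f : Fin N → Bool, ∀ s, ts k ≤ s → s < ts (k + 1) →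
      ∀ i j, i ≠ j → P s i j ≠ 0 → (f i = f j ↔ 0 < P s i j)) :
    ∀ x0 : Fin N → ℝ, Tendsto (fun t => traj P x0 t) atTop (nhds 0) := by
  intro x0
  have : Nonempty (Fin N) := by
    by_contra h
    exact hnobal 0 ⟨fun i => (h ⟨i⟩).elim, fun _ _ _ i => (h ⟨i⟩).elim⟩
  have hN : 0 < N := Fin.pos_iff_nonempty.2 this
  have hQ : ∀ t, IsUniformlyStochastic (signedLift (P t)) γ := fun t =>
    isUniformlyStochastic_signedLift (habs t) (hdiag t) (hlow t)
  have hsc : ∀ k, StronglyConnected (unionGraph (signedLift ∘ P) (ts k) (ts (k + 1))) :=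
    fun k => stronglyConnected_signedLift (fun a b =>
      ReflTransGen.mono (fun _ _ ⟨s, h₁, h₂, _, h⟩ => ⟨s, h₁, h₂, h⟩) _ _ (hjoint k a b)) (hnobal k)
  have hts : StrictMono ts := strictMono_nat_of_lt_succ hmono
  set K := Fintype.card (Fin N × Bool) - 1
  have hK : 0 < K := by simp [K]; omega
  refine tendsto_zero_iff_norm_tendsto_zero.2 <| tendsto_zero_of_antitone_of_le_mul
    (antitone_nat_of_succ_le fun t => norm_mulVec_le_of_signedLift (hQ t) _)
    (fun _ => norm_nonneg _) (hts.comp (strictMono_mul_left_of_pos hK)).tendsto_atTop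
    (ρ := 1 - γ ^ (K * B)) (by linarith [pow_le_one₀ hγ.le (hQ 0).le_one (n := K * B)])
    (by linarith [pow_pos hγ (K * B)]) fun n => ?_
  calc ‖traj P x0 (ts (K * (n + 1)))‖
      ≤ (1 - γ ^ (ts (K * n + K) - ts (K * n))) * ‖traj P x0 (ts (K * n))‖ :=
        norm_le_one_sub_pow_mul_norm hγ.le hQ (fun t => rfl)
          (hts.monotone.comp fun _ _ h => Nat.add_le_add_left h _) (fun k => hsc (K * n + k))
    _ ≤ (1 - γ ^ (K * B)) * ‖traj P x0 (ts (K * n))‖ :=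
        mul_le_mul_of_nonneg_right (sub_le_sub_left (pow_le_pow_of_le_one hγ.le (hQ 0).le_one
          (Nat.sub_le_mul_of_sub_succ_le hts.monotone hbdd _ _)) 1) (norm_nonneg _)

theorem stmt13 {N : ℕ} (P : ℕ → Matrix (Fin N) (Fin N) ℝ) (γ : ℝ) (hγ : 0 < γ)
    (habs : ∀ t i, ∑ j, |P t i j| = 1) (hdiag : ∀ t i, 0 < P t i i)
    (hlow : ∀ t i j, P t i j ≠ 0 → γ ≤ |P t i j|)
    (ts : ℕ → ℕ) (B : ℕ) (hts0 : ts 0 = 0) (hmono : ∀ k, ts k < ts (k + 1))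
    (hbdd : ∀ k, ts (k + 1) - ts k ≤ B)
    -- over each interval the union graph is strongly connected
    (hjoint : ∀ k, StronglyConnected (fun j i : Fin N =>
      ∃ s, ts k ≤ s ∧ s < ts (k + 1) ∧ i ≠ j ∧ P s i j ≠ 0))
    -- no bipartition (one part possibly empty) works simultaneously for all
    -- graphs of the interval
    (hnobal : ∀ k, ¬ ∃ f : Fin N → Bool, ∀ s, ts k ≤ s → s < ts (k + 1) →
      ∀ i j, i ≠ j → P s i j ≠ 0 → (f i = f j ↔ 0 < P s i j)) :
    ∀ x0 : Fin N → ℝ, Tendsto (fun t => traj P x0 t) atTop (nhds 0) :=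
  stmt13_general P γ hγ habs hdiag hlow ts B hmono hbdd hjoint hnobal
end

section
/- Let (P(t))_{t≥0} satisfy: positive diagonals, |P(t)| row-stochastic, nonzero entries bounded below in modulus by γ ∈ (0,1). Let V^s be the root vertex set of the union of all graphs G(P(t)) over [0,∞). Assume: (i) there is a bipartition of V^s into two nonempty subsets such that for every t, edges of G(P(t)) between the subsets are negative and edges within each subset are positive; (ii) there is an infinite sequence of uniformly bounded intervals over each of which the union of the graphs contains a spanning tree with root vertex set equal to V^s. Then the agents in V^s polarize to values C and −C, and for every other agent i, limsup_{t→∞} |x_i(t)| ≤ |C|. -/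
open Matrix Filter MeasureTheory

/-- Agents in the root set `Root` converge to `C` / `-C` according to the
bipartition `f`, and every other agent satisfies `limsup |x_i(t)| ≤ |C|`. -/
def PolarizesWithTail {N : ℕ} (P : ℕ → Matrix (Fin N) (Fin N) ℝ)
    (Root : Fin N → Prop) (f : Fin N → Bool) (x0 : Fin N → ℝ) (C : ℝ) : Prop :=
  (∀ i, Root i → Tendsto (fun t => traj P x0 t i) atTop
      (nhds (if f i then C else -C))) ∧
  (∀ i, ¬ Root i → Filter.limsup (fun t => |traj P x0 t i|) atTop ≤ |C|)

/-!
Let `D` be the diagonal matrix of signs `±1` given by the bipartition. By (i), the rows of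
`D P(t) D` indexed by `V^s` are those of `|P(t)|`, and agents of `V^s` only listen to agents of
`V^s`; so `y = D x` evolves on `V^s` by averaging with the row-stochastic matrices `|P(t)|`.
By (ii), over `N` consecutive intervals every agent puts weight at least `δ = γ^(NB)` on every
agent of `V^s`. Hence over each such block `max y - min y` on `V^s` shrinks by the factor
`1 - 2δ`, so `y` reaches a consensus `C` there, which is polarization of `x` to `±C`; likewise
`max_i |x_i|` loses a `δ`-fraction of its excess over `|x_r| → |C|`, which gives the `limsup`
bound. Finally `C` is a linear functional of `x(0)` taking the value `1` at the sign vector, so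
it vanishes only on a null hyperplane.
-/

section LeftProduct

variable {ι : Type*} [Fintype ι] [DecidableEq ι]

def leftProd (A : ℕ → Matrix ι ι ℝ) (a : ℕ) : ℕ → Matrix ι ι ℝ
  | 0 => 1
  | n + 1 => A (a + n) * leftProd A a n

variable {A : ℕ → Matrix ι ι ℝ}

@[simp] lemma leftProd_zero (a : ℕ) : leftProd A a 0 = 1 := rfl

lemma leftProd_succ (a n : ℕ) : leftProd A a (n + 1) = A (a + n) * leftProd A a n := rfl

lemma leftProd_add (a m n : ℕ) :
    leftProd A a (m + n) = leftProd A (a + m) n * leftProd A a m := by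
  induction n with
  | zero => simp
  | succ n ih => rw [← add_assoc, leftProd_succ, ih, leftProd_succ, Matrix.mul_assoc, add_assoc]

lemma leftProd_blocks {ts : ℕ → ℕ} (hts : Monotone ts) (k m : ℕ) :
    leftProd A (ts k) (ts (k + m) - ts k) =
      leftProd (fun l => leftProd A (ts l) (ts (l + 1) - ts l)) k m := by
  induction m with
  | zero => simp
  | succ m ih =>
    have h₁ := hts (k.le_add_right m)
    have h₂ : ts (k + m) ≤ ts (k + m + 1) := hts (k + m).le_succ
    have hsplit := leftProd_add (A := A) (ts k) (ts (k + m) - ts k) (ts (k + m + 1) - ts (k + m))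
    rw [Nat.add_sub_of_le h₁, add_comm, Nat.sub_add_sub_cancel h₂ h₁] at hsplit
    rw [leftProd_succ, ← ih, ← add_assoc, hsplit]

lemma leftProd_mem_rowStochastic (hA : ∀ t, A t ∈ rowStochastic ℝ ι) (a n : ℕ) :
    leftProd A a n ∈ rowStochastic ℝ ι := by
  induction n with
  | zero => exact one_mem _
  | succ n ih => exact mul_mem (hA _) ih

lemma leftProd_nonneg (hA : ∀ t i j, 0 ≤ A t i j) (a n : ℕ) (i j : ι) :
    0 ≤ leftProd A a n i j := by
  induction n generalizing i j with
  | zero => by_cases h : i = j <;> simp [one_apply, h]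
  | succ n ih => exact Finset.sum_nonneg fun k _ => mul_nonneg (hA _ i k) (ih k j)

omit [DecidableEq ι] in
lemma single_le_mul_apply {M Q : Matrix ι ι ℝ} (hM : ∀ i j, 0 ≤ M i j)
    (hQ : ∀ i j, 0 ≤ Q i j) (i k j : ι) : M i k * Q k j ≤ (M * Q) i j :=
  Finset.single_le_sum (f := fun l => M i l * Q l j)
    (fun l _ => mul_nonneg (hM i l) (hQ l j)) (Finset.mem_univ k)

lemma pow_le_leftProd_apply_self {γ : ℝ} (hγ : 0 ≤ γ) (hA : ∀ t i j, 0 ≤ A t i j)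
    (hdiag : ∀ t i, γ ≤ A t i i) (a n : ℕ) (i : ι) : γ ^ n ≤ leftProd A a n i i := by
  induction n with
  | zero => simp
  | succ n ih =>
    calc γ ^ (n + 1) = γ * γ ^ n := pow_succ' γ n
      _ ≤ A (a + n) i i * leftProd A a n i i :=
        mul_le_mul (hdiag _ i) ih (pow_nonneg hγ n) ((hγ.trans (hdiag _ i)))
      _ ≤ leftProd A a (n + 1) i i :=
        single_le_mul_apply (hA _) (leftProd_nonneg hA a n) i i i

lemma pow_le_leftProd_apply {γ : ℝ} (hγ : 0 ≤ γ) (hA : ∀ t i j, 0 ≤ A t i j)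
    (hdiag : ∀ t i, γ ≤ A t i i) {a n s : ℕ} {i j : ι} (h₁ : a ≤ s) (h₂ : s < a + n)
    (hs : γ ≤ A s i j) : γ ^ n ≤ leftProd A a n i j := by
  obtain ⟨m, rfl⟩ := Nat.exists_eq_add_of_le h₁
  obtain ⟨p, rfl⟩ : ∃ p, n = m + 1 + p := ⟨n - (m + 1), by omega⟩
  have hΦ := leftProd_nonneg hA
  have hstep : γ * γ ^ m ≤ leftProd A a (m + 1) i j :=
    calc γ * γ ^ m ≤ A (a + m) i j * leftProd A a m j j :=
          mul_le_mul hs (pow_le_leftProd_apply_self hγ hA hdiag a m j) (pow_nonneg hγ m)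
            (hγ.trans hs)
      _ ≤ leftProd A a (m + 1) i j := single_le_mul_apply (hA _) (hΦ a m) i j j
  rw [leftProd_add]
  calc γ ^ (m + 1 + p) = γ ^ p * (γ * γ ^ m) := by ring
    _ ≤ leftProd A (a + (m + 1)) p i i * leftProd A a (m + 1) i j :=
      mul_le_mul (pow_le_leftProd_apply_self hγ hA hdiag _ p i) hstep
        (mul_nonneg hγ (pow_nonneg hγ m)) (hΦ _ _ i i)
    _ ≤ _ := single_le_mul_apply (hΦ _ _) (hΦ _ _) i i j

end LeftProduct

section Spreading

variable {ι : Type*} [Fintype ι]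

lemma eq_univ_or_card_lt_of_reachable {R : ι → ι → Prop} {S T : Finset ι} {r : ι}
    (hST : S ⊆ T) (hr : r ∈ S) (hreach : ∀ w, Relation.ReflTransGen R r w)
    (hstep : ∀ b c, b ∈ S → R b c → c ∈ T) : S = Finset.univ ∨ S.card < T.card := by
  rcases hST.eq_or_ssubset with rfl | hlt
  · refine Or.inl (Finset.eq_univ_of_forall fun w => ?_)
    induction hreach w with
    | refl => exact hr
    | tail _ hbc ih => exact hstep _ _ ih hbc
  · exact Or.inr (Finset.card_lt_card hlt)

variable [DecidableEq ι]

lemma pow_card_le_leftProd_apply {Q : ℕ → Matrix ι ι ℝ} {ε : ℝ} (hε : 0 ≤ ε)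
    (hQ : ∀ m i j, 0 ≤ Q m i j) (hdiag : ∀ m i, ε ≤ Q m i i) {a : ℕ} {r : ι}
    (hreach : ∀ m w, Relation.ReflTransGen (fun j i => ε ≤ Q (a + m) i j) r w) (i : ι) :
    ε ^ Fintype.card ι ≤ leftProd Q a (Fintype.card ι) i r := by
  -- `S m`, the agents with weight at least `ε ^ m` on `r` after `m` factors, gains an agent at
  -- every step until it is everything.
  set S : ℕ → Finset ι := fun m => {i | ε ^ m ≤ leftProd Q a m i r} with hS
  have hstep : ∀ m j i, j ∈ S m → ε ≤ Q (a + m) i j → i ∈ S (m + 1) := by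
    intro m j i hj hij
    simp only [hS, Finset.mem_filter, Finset.mem_univ, true_and] at hj ⊢
    calc ε ^ (m + 1) = ε * ε ^ m := pow_succ' ε m
      _ ≤ Q (a + m) i j * leftProd Q a m j r :=
        mul_le_mul hij hj (pow_nonneg hε m) (hε.trans hij)
      _ ≤ leftProd Q a (m + 1) i r :=
        single_le_mul_apply (hQ _) (leftProd_nonneg hQ a m) i j r
  have hsub : ∀ m, S m ⊆ S (m + 1) := fun m j hj => hstep m j j hj (hdiag _ j)
  have hr : ∀ m, r ∈ S m := by
    intro m
    induction m with
    | zero => simp [hS]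
    | succ m ih => exact hsub m ih
  have hgrow : ∀ m, S m = Finset.univ ∨ m + 1 ≤ (S m).card := by
    intro m
    induction m with
    | zero => exact Or.inr (Finset.card_pos.2 ⟨r, hr 0⟩)
    | succ m ih =>
      rcases eq_univ_or_card_lt_of_reachable (hsub m) (hr m) (hreach m) (hstep m) with h | h
      · exact Or.inl (Finset.univ_subset_iff.1 (h ▸ hsub m))
      · rcases ih with h' | h'
        · exact Or.inl (Finset.univ_subset_iff.1 (h' ▸ hsub m))
        · exact Or.inr (by omega)
  have hfull : S (Fintype.card ι) = Finset.univ :=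
    (hgrow _).resolve_right fun h => by have := Finset.card_le_univ (S (Fintype.card ι)); omega
  have hi : i ∈ S (Fintype.card ι) := hfull ▸ Finset.mem_univ i
  simpa [hS] using hi

lemma pow_le_leftProd_of_reachable {A : ℕ → Matrix ι ι ℝ} (hA : ∀ t i j, 0 ≤ A t i j) {γ : ℝ}
    (hγ₀ : 0 ≤ γ) (hγ₁ : γ ≤ 1) (hdiag : ∀ t i, γ ≤ A t i i) {ts : ℕ → ℕ} (hts : Monotone ts)
    {B : ℕ} (hB : ∀ k, ts (k + 1) - ts k ≤ B) {r : ι}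
    (hreach : ∀ k w, Relation.ReflTransGen
      (fun j i => ∃ s, ts k ≤ s ∧ s < ts (k + 1) ∧ γ ≤ A s i j) r w) (k : ℕ) (i : ι) :
    (γ ^ B) ^ Fintype.card ι ≤ leftProd A (ts k) (ts (k + Fintype.card ι) - ts k) i r := by
  have hpow : ∀ l, γ ^ B ≤ γ ^ (ts (l + 1) - ts l) := fun l =>
    pow_le_pow_of_le_one hγ₀ hγ₁ (hB l)
  rw [leftProd_blocks hts]
  refine pow_card_le_leftProd_apply (pow_nonneg hγ₀ B) (fun l => leftProd_nonneg hA _ _)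
    (fun l i => (hpow l).trans (pow_le_leftProd_apply_self hγ₀ hA hdiag _ _ i))
    (fun m w => Relation.ReflTransGen.mono (fun _ _ ⟨s, h₁, h₂, hs⟩ =>
      (hpow _).trans (pow_le_leftProd_apply hγ₀ hA hdiag h₁ (by omega) hs)) _ _
      (hreach (k + m) w)) i

end Spreading

section Averaging

variable {ι : Type*} [Fintype ι] [DecidableEq ι]

lemma mulVec_apply_eq_sub {M : Matrix ι ι ℝ} (hM : M ∈ rowStochastic ℝ ι) (v : ι → ℝ)
    (c : ℝ) (i : ι) : (M *ᵥ v) i = c - ∑ j, M i j * (c - v j) := by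
  simp only [mul_sub, Finset.sum_sub_distrib, ← Finset.sum_mul,
    sum_row_of_mem_rowStochastic hM, one_mul, sub_sub_cancel]
  rfl

lemma mulVec_apply_le_sub {M : Matrix ι ι ℝ} (hM : M ∈ rowStochastic ℝ ι) {v : ι → ℝ}
    {c c' δ : ℝ} {i r : ι} (hv : ∀ j, M i j ≠ 0 → v j ≤ c) (hδ : δ ≤ M i r)
    (hr : v r ≤ c') (hc : c' ≤ c) : (M *ᵥ v) i ≤ c - δ * (c - c') := by
  have hterm : ∀ j, 0 ≤ M i j * (c - v j) := fun j => by
    by_cases h : M i j = 0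
    · simp [h]
    · exact mul_nonneg (nonneg_of_mem_rowStochastic hM) (sub_nonneg.2 (hv j h))
  rw [mulVec_apply_eq_sub hM v c, sub_le_sub_iff_left]
  calc δ * (c - c') ≤ M i r * (c - v r) :=
        mul_le_mul hδ (by linarith) (sub_nonneg.2 hc) (nonneg_of_mem_rowStochastic hM)
    _ ≤ ∑ j, M i j * (c - v j) :=
        Finset.single_le_sum (fun j _ => hterm j) (Finset.mem_univ r)

end Averaging

section Contraction

variable {ι : Type*} [Fintype ι] [DecidableEq ι] {A : ℕ → Matrix ι ι ℝ} {R : Finset ι}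

def IsClosedUnder (A : ℕ → Matrix ι ι ℝ) (R : Finset ι) : Prop :=
  ∀ t, ∀ i ∈ R, ∀ j, A t i j ≠ 0 → j ∈ R

lemma IsClosedUnder.leftProd_apply_eq_zero (hR : IsClosedUnder A R) (a n : ℕ) {i j : ι}
    (hi : i ∈ R) (hj : j ∉ R) : leftProd A a n i j = 0 := by
  induction n generalizing i with
  | zero => exact one_apply_ne fun h => hj (h ▸ hi)
  | succ n ih =>
    rw [leftProd_succ, mul_apply]
    refine Finset.sum_eq_zero fun k _ => ?_
    by_cases hk : k ∈ R
    · rw [ih hk, mul_zero]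
    · rw [not_imp_comm.1 (hR _ i hi k) hk, zero_mul]

lemma IsClosedUnder.le_leftProd_mulVec (hR : IsClosedUnder A R) (hA : ∀ t i j, 0 ≤ A t i j)
    {z : ℕ → ι → ℝ} (hz : ∀ t, ∀ i ∈ R, z (t + 1) i ≤ (A t *ᵥ z t) i) (a n : ℕ) :
    ∀ i ∈ R, z (a + n) i ≤ (leftProd A a n *ᵥ z a) i := by
  induction n with
  | zero => intro i _; simp
  | succ n ih =>
    intro i hi
    rw [← add_assoc, leftProd_succ, ← mulVec_mulVec]
    refine (hz _ i hi).trans (Finset.sum_le_sum fun j _ => ?_)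
    by_cases hj : j ∈ R
    · exact mul_le_mul_of_nonneg_left (ih j hj) (hA _ i j)
    · simp [not_imp_comm.1 (hR _ i hi j) hj]

lemma IsClosedUnder.sup'_le_sub (hR : IsClosedUnder A R) (hA : ∀ t, A t ∈ rowStochastic ℝ ι)
    (hne : R.Nonempty) {z : ℕ → ι → ℝ} (hz : ∀ t, ∀ i ∈ R, z (t + 1) i ≤ (A t *ᵥ z t) i)
    {a n : ℕ} {δ : ℝ} {r : ι} (hr : r ∈ R) (hmix : ∀ i ∈ R, δ ≤ leftProd A a n i r) :
    R.sup' hne (z (a + n)) ≤ R.sup' hne (z a) - δ * (R.sup' hne (z a) - z a r) := by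
  refine Finset.sup'_le _ _ fun i hi => ?_
  have hA₀ : ∀ t i j, 0 ≤ A t i j := fun t _ _ => nonneg_of_mem_rowStochastic (hA t)
  refine (hR.le_leftProd_mulVec hA₀ hz a n i hi).trans ?_
  refine mulVec_apply_le_sub (leftProd_mem_rowStochastic hA a n) (fun j hj => ?_) (hmix i hi)
    le_rfl (Finset.le_sup' _ hr)
  exact Finset.le_sup' _ (by_contra fun hjR => hj (hR.leftProd_apply_eq_zero a n hi hjR))

lemma IsClosedUnder.sup'_add_sup'_neg_le (hR : IsClosedUnder A R)
    (hA : ∀ t, A t ∈ rowStochastic ℝ ι) (hne : R.Nonempty) {y : ℕ → ι → ℝ}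
    (hy : ∀ t, ∀ i ∈ R, y (t + 1) i = (A t *ᵥ y t) i) {a n : ℕ} {δ : ℝ}
    (hmix : ∀ i ∈ R, ∀ r ∈ R, δ ≤ leftProd A a n i r) :
    R.sup' hne (y (a + n)) + R.sup' hne (-y (a + n)) ≤
      (1 - 2 * δ) * (R.sup' hne (y a) + R.sup' hne (-y a)) := by
  have hneg : ∀ t, ∀ i ∈ R, (-y (t + 1)) i ≤ (A t *ᵥ -y t) i := fun t i hi => by
    rw [mulVec_neg, Pi.neg_apply, Pi.neg_apply, hy t i hi]
  obtain ⟨rmin, hrmin, hmin⟩ := Finset.exists_mem_eq_sup' hne (-y a)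
  obtain ⟨rmax, hrmax, hmax⟩ := Finset.exists_mem_eq_sup' hne (y a)
  have h₁ := hR.sup'_le_sub hA hne (fun t i hi => (hy t i hi).le) hrmin (hmix · · rmin hrmin)
  have h₂ := hR.sup'_le_sub hA hne (z := fun t => -y t) hneg hrmax (hmix · · rmax hrmax)
  rw [Pi.neg_apply, ← hmax] at h₂
  rw [Pi.neg_apply] at hmin
  rw [show y a rmin = -R.sup' hne (-y a) by rw [hmin, neg_neg]] at h₁
  linarith

lemma IsClosedUnder.antitone_sup' (hR : IsClosedUnder A R) (hA : ∀ t, A t ∈ rowStochastic ℝ ι)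
    (hne : R.Nonempty) {z : ℕ → ι → ℝ} (hz : ∀ t, ∀ i ∈ R, z (t + 1) i ≤ (A t *ᵥ z t) i) :
    Antitone fun t => R.sup' hne (z t) := by
  refine antitone_nat_of_succ_le fun t => ?_
  obtain ⟨r, hr⟩ := hne
  simpa using hR.sup'_le_sub hA _ hz (n := 1) (δ := 0) hr
    fun i _ => leftProd_nonneg (fun t _ _ => nonneg_of_mem_rowStochastic (hA t)) t 1 i r

end Contraction

section Consensus

lemma le_of_tendsto_of_le_sub {u w : ℕ → ℝ} {τ : ℕ → ℕ} {L c δ : ℝ}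
    (hu : Tendsto u atTop (nhds L)) (hw : Tendsto w atTop (nhds c))
    (hτ : Tendsto τ atTop atTop) (hδ : 0 < δ)
    (hstep : ∀ k, u (τ (k + 1)) ≤ u (τ k) - δ * (u (τ k) - w (τ k))) : L ≤ c := by
  have hlim := le_of_tendsto_of_tendsto' ((hu.comp hτ).comp (tendsto_add_atTop_nat 1))
    ((hu.comp hτ).sub (((hu.comp hτ).sub (hw.comp hτ)).const_mul δ)) hstep
  nlinarith

lemma add_sub_succ_of_monotone {τ : ℕ → ℕ} (hτ : Monotone τ) (k : ℕ) :
    τ k + (τ (k + 1) - τ k) = τ (k + 1) :=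
  Nat.add_sub_of_le (hτ k.le_succ)

variable {ι : Type*} [Fintype ι] [DecidableEq ι] {A : ℕ → Matrix ι ι ℝ}

theorem IsClosedUnder.exists_tendsto {R : Finset ι} (hR : IsClosedUnder A R)
    (hA : ∀ t, A t ∈ rowStochastic ℝ ι) (hne : R.Nonempty) {y : ℕ → ι → ℝ}
    (hy : ∀ t, ∀ i ∈ R, y (t + 1) i = (A t *ᵥ y t) i) {τ : ℕ → ℕ} (hτ : StrictMono τ)
    {δ : ℝ} (hδ : 0 < δ)
    (hmix : ∀ k, ∀ i ∈ R, ∀ r ∈ R, δ ≤ leftProd A (τ k) (τ (k + 1) - τ k) i r) :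
    ∃ C, ∀ i ∈ R, Tendsto (fun t => y t i) atTop (nhds C) := by
  have hneg : ∀ t, ∀ i ∈ R, (-y (t + 1)) i ≤ (A t *ᵥ -y t) i := fun t i hi => by
    rw [mulVec_neg, Pi.neg_apply, Pi.neg_apply, hy t i hi]
  set M : ℕ → ℝ := fun t => R.sup' hne (y t)
  set M' : ℕ → ℝ := fun t => R.sup' hne (-y t)
  have hle : ∀ t, ∀ i ∈ R, y t i ≤ M t := fun t i hi => Finset.le_sup' (y t) hi
  have hge : ∀ t, ∀ i ∈ R, -M' t ≤ y t i := fun t i hi => neg_le.2 (Finset.le_sup' (-y t) hi)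
  obtain ⟨r₀, hr₀⟩ := id hne
  have hManti : Antitone M := hR.antitone_sup' hA hne fun t i hi => (hy t i hi).le
  have hM'anti : Antitone M' := hR.antitone_sup' hA hne (z := fun t => -y t) hneg
  have hMlim := tendsto_atTop_ciInf hManti ⟨-M' 0, by
    rintro _ ⟨t, rfl⟩
    exact (neg_le_neg (hM'anti t.zero_le)).trans ((hge t r₀ hr₀).trans (hle t r₀ hr₀))⟩
  have hM'lim := tendsto_atTop_ciInf hM'anti ⟨-M 0, by
    rintro _ ⟨t, rfl⟩
    exact neg_le.1 ((hge t r₀ hr₀).trans ((hle t r₀ hr₀).trans (hManti t.zero_le)))⟩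
  have hspread : ∀ k, (M + M') (τ (k + 1)) ≤
      (M + M') (τ k) - 2 * δ * ((M + M') (τ k) - (fun _ => (0 : ℝ)) (τ k)) := fun k => by
    have h := hR.sup'_add_sup'_neg_le hA hne hy (hmix k)
    rw [add_sub_succ_of_monotone hτ.monotone] at h
    simp only [Pi.add_apply, M, M', sub_zero]
    linarith
  have hL : (⨅ t, M t) + ⨅ t, M' t ≤ 0 :=
    le_of_tendsto_of_le_sub (hMlim.add hM'lim) tendsto_const_nhds hτ.tendsto_atTop
      (by positivity) hspread
  have hL' : -⨅ t, M' t = ⨅ t, M t := le_antisymm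
    (le_of_tendsto_of_tendsto' hM'lim.neg hMlim fun t => (hge t r₀ hr₀).trans (hle t r₀ hr₀))
    (by linarith)
  refine ⟨⨅ t, M t, fun i hi => tendsto_of_tendsto_of_tendsto_of_le_of_le ?_ hMlim
    (fun t => hge t i hi) (fun t => hle t i hi)⟩
  simpa [hL'] using hM'lim.neg

theorem limsup_le_of_mixing (hA : ∀ t, A t ∈ rowStochastic ℝ ι) {z : ℕ → ι → ℝ}
    (hz₀ : ∀ t i, 0 ≤ z t i) (hz : ∀ t i, z (t + 1) i ≤ (A t *ᵥ z t) i) {τ : ℕ → ℕ}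
    (hτ : StrictMono τ) {δ : ℝ} (hδ : 0 < δ) {r : ι}
    (hmix : ∀ k i, δ ≤ leftProd A (τ k) (τ (k + 1) - τ k) i r) {c : ℝ}
    (hr : Tendsto (fun t => z t r) atTop (nhds c)) (i : ι) :
    limsup (fun t => z t i) atTop ≤ c := by
  have hR : IsClosedUnder A Finset.univ := fun _ _ _ _ _ => Finset.mem_univ _
  have hne : (Finset.univ : Finset ι).Nonempty := ⟨r, Finset.mem_univ r⟩
  set K : ℕ → ℝ := fun t => Finset.univ.sup' hne (z t)
  have hle : ∀ t j, z t j ≤ K t := fun t j => Finset.le_sup' (z t) (Finset.mem_univ j)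
  have hKanti : Antitone K := hR.antitone_sup' hA hne fun t j _ => hz t j
  have hKlim := tendsto_atTop_ciInf hKanti ⟨0, by
    rintro _ ⟨t, rfl⟩
    exact (hz₀ t r).trans (hle t r)⟩
  have hstep : ∀ k, K (τ (k + 1)) ≤ K (τ k) - δ * (K (τ k) - z (τ k) r) := fun k => by
    simpa only [add_sub_succ_of_monotone hτ.monotone] using
      hR.sup'_le_sub hA hne (fun t j _ => hz t j) (Finset.mem_univ r) fun i _ => hmix k i
  calc limsup (fun t => z t i) atTop ≤ limsup K atTop :=
        limsup_le_limsup (Eventually.of_forall fun t => hle t i)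
          (isCoboundedUnder_le_of_le atTop fun t => hz₀ t i) hKlim.isBoundedUnder_le
    _ = ⨅ t, K t := hKlim.limsup_eq
    _ ≤ c := le_of_tendsto_of_le_sub hKlim hr hτ.tendsto_atTop hδ hstep

end Consensus

section Signs

variable {ι : Type*} (f : ι → Bool)

def boolSign (i : ι) : ℝ := if f i then 1 else -1

lemma boolSign_mul_self (i : ι) : boolSign f i * boolSign f i = 1 := by
  unfold boolSign; split <;> norm_num

lemma abs_boolSign (i : ι) : |boolSign f i| = 1 := by
  unfold boolSign; split <;> norm_num

lemma boolSign_mul_eq_ite (i : ι) (c : ℝ) : boolSign f i * c = if f i then c else -c := by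
  unfold boolSign; split <;> ring

lemma boolSign_mul_mul_boolSign {q : ℝ} {i j : ι} (h : q ≠ 0 → (f i = f j ↔ 0 < q)) :
    boolSign f i * q * boolSign f j = |q| := by
  rcases lt_trichotomy q 0 with hq | rfl | hq
  · have hij : f i ≠ f j := fun e => hq.not_gt ((h hq.ne).1 e)
    rw [abs_of_neg hq]
    unfold boolSign
    cases hi : f i <;> cases hj : f j <;> simp_all
  · simp
  · have hij : f i = f j := (h hq.ne').2 hq
    rw [abs_of_pos hq]
    unfold boolSign
    cases hi : f i <;> cases hj : f j <;> simp_all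

lemma boolSign_mul_mulVec_apply [Fintype ι] {Q : Matrix ι ι ℝ} {i : ι}
    (h : ∀ j, Q i j ≠ 0 → (f i = f j ↔ 0 < Q i j)) (v : ι → ℝ) :
    boolSign f i * (Q *ᵥ v) i = (Q.map abs *ᵥ fun j => boolSign f j * v j) i := by
  simp only [mulVec, dotProduct, Finset.mul_sum, map_apply]
  refine Finset.sum_congr rfl fun j _ => ?_
  rw [← boolSign_mul_mul_boolSign f (h j)]
  linear_combination (-(boolSign f i * Q i j * v j)) * boolSign_mul_self f j

lemma abs_mulVec_apply_le [Fintype ι] (Q : Matrix ι ι ℝ) (v : ι → ℝ) (i : ι) :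
    |(Q *ᵥ v) i| ≤ (Q.map abs *ᵥ fun j => |v j|) i := by
  simp only [mulVec, dotProduct, map_apply, ← abs_mul]
  exact Finset.abs_sum_le_sum_abs _ _

end Signs

lemma traj_eq_leftProd_mulVec {N : ℕ} (P : ℕ → Matrix (Fin N) (Fin N) ℝ) (x0 : Fin N → ℝ)
    (t : ℕ) : traj P x0 t = leftProd P 0 t *ᵥ x0 := by
  induction t with
  | zero => simp [traj]
  | succ t ih => rw [traj, ih, leftProd_succ, zero_add, mulVec_mulVec]

lemma exists_tendsto_dotProduct {ι : Type*} [Fintype ι] [DecidableEq ι] {u : ℕ → ι → ℝ}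
    (hu : ∀ x, ∃ c, Tendsto (fun t => u t ⬝ᵥ x) atTop (nhds c)) :
    ∃ v, ∀ x, Tendsto (fun t => u t ⬝ᵥ x) atTop (nhds (v ⬝ᵥ x)) := by
  choose c hc using fun j => hu (Pi.single j 1)
  have hlim : Tendsto u atTop (nhds c) :=
    tendsto_pi_nhds.2 fun j => by simpa [dotProduct_single] using hc j
  exact ⟨c, fun x => ((continuous_id.dotProduct continuous_const).tendsto c).comp hlim⟩

lemma ae_apply_ne_zero {E : Type*} [NormedAddCommGroup E] [NormedSpace ℝ E] [MeasurableSpace E]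
    [BorelSpace E] [FiniteDimensional ℝ E] (μ : Measure E) [μ.IsAddHaarMeasure]
    {L : E →ₗ[ℝ] ℝ} (hL : L ≠ 0) : ∀ᵐ x ∂μ, L x ≠ 0 := by
  have hker : LinearMap.ker L ≠ ⊤ := by rwa [Ne, LinearMap.ker_eq_top]
  exact ae_iff.2 (measure_mono_null (fun x hx => by simpa using hx)
    (Measure.addHaar_submodule μ _ hker))

section SignedNetwork

variable {N : ℕ} {P : ℕ → Matrix (Fin N) (Fin N) ℝ} {Root : Fin N → Prop} {f : Fin N → Bool}

lemma map_abs_mem_rowStochastic (habs : ∀ t i, ∑ j, |P t i j| = 1) (t : ℕ) :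
    (P t).map abs ∈ rowStochastic ℝ (Fin N) :=
  mem_rowStochastic_iff_sum.2 ⟨fun _ _ => abs_nonneg _, habs t⟩

lemma root_of_ne_zero
    (hRoot : ∀ v, Root v ↔ ∀ w, Relation.ReflTransGen
      (fun j i : Fin N => i ≠ j ∧ ∃ t, P t i j ≠ 0) v w)
    {t : ℕ} {i j : Fin N} (hi : Root i) (hP : P t i j ≠ 0) : Root j := by
  by_cases hij : j = i
  · exact hij ▸ hi
  · exact (hRoot j).2 fun w => .head ⟨Ne.symm hij, t, hP⟩ ((hRoot i).1 hi w)

lemma pow_le_leftProd_map_abs {γ : ℝ} (hγ : 0 < γ) (habs : ∀ t i, ∑ j, |P t i j| = 1)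
    (hdiag : ∀ t i, 0 < P t i i) (hlow : ∀ t i j, P t i j ≠ 0 → γ ≤ |P t i j|)
    {ts : ℕ → ℕ} {B : ℕ} (hts : Monotone ts) (hbdd : ∀ k, ts (k + 1) - ts k ≤ B) {r : Fin N}
    (hreach : ∀ k w, Relation.ReflTransGen
      (fun j i : Fin N => ∃ s, ts k ≤ s ∧ s < ts (k + 1) ∧ i ≠ j ∧ P s i j ≠ 0) r w)
    (k : ℕ) (i : Fin N) :
    (γ ^ B) ^ N ≤ leftProd (fun t => (P t).map abs) (ts (k * N)) (ts ((k + 1) * N) - ts (k * N))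
      i r := by
  have hA := map_abs_mem_rowStochastic habs
  have hdiagA : ∀ t i, γ ≤ |P t i i| := fun t i => hlow t i i (hdiag t i).ne'
  have hreachA : ∀ k w, Relation.ReflTransGen
      (fun j i => ∃ s, ts k ≤ s ∧ s < ts (k + 1) ∧ γ ≤ (P s).map abs i j) r w := fun k w =>
    Relation.ReflTransGen.mono (fun _ _ ⟨s, h₁, h₂, _, hP⟩ => ⟨s, h₁, h₂, hlow s _ _ hP⟩)
      _ _ (hreach k w)
  simpa [Nat.succ_mul] using pow_le_leftProd_of_reachable (A := fun t => (P t).map abs)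
    (fun t _ _ => nonneg_of_mem_rowStochastic (hA t)) hγ.le
    ((hdiagA 0 r).trans (le_one_of_mem_rowStochastic (hA 0))) hdiagA hts hbdd hreachA (k * N) i

lemma boolSign_mul_traj_succ (hdiag : ∀ t i, 0 < P t i i)
    (hclosed : ∀ t i j, Root i → P t i j ≠ 0 → Root j)
    (hbal : ∀ t i j, Root i → Root j → i ≠ j → P t i j ≠ 0 → (f i = f j ↔ 0 < P t i j))
    (x0 : Fin N → ℝ) (t : ℕ) {i : Fin N} (hi : Root i) :
    boolSign f i * traj P x0 (t + 1) i =
      ((P t).map abs *ᵥ fun j => boolSign f j * traj P x0 t j) i := by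
  refine boolSign_mul_mulVec_apply f (fun j hP => ?_) _
  by_cases hij : i = j
  · subst hij
    simpa using hdiag t i
  · exact hbal t i j hi (hclosed t i j hi hP) hij hP

lemma boolSign_mul_traj_boolSign (habs : ∀ t i, ∑ j, |P t i j| = 1)
    (hdiag : ∀ t i, 0 < P t i i) (hclosed : ∀ t i j, Root i → P t i j ≠ 0 → Root j)
    (hbal : ∀ t i j, Root i → Root j → i ≠ j → P t i j ≠ 0 → (f i = f j ↔ 0 < P t i j))
    (t : ℕ) {i : Fin N} (hi : Root i) : boolSign f i * traj P (boolSign f) t i = 1 := by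
  induction t generalizing i with
  | zero => exact boolSign_mul_self f i
  | succ t ih =>
    rw [boolSign_mul_traj_succ hdiag hclosed hbal (boolSign f) t hi, ← habs t i]
    simp only [mulVec, dotProduct, map_apply]
    refine Finset.sum_congr rfl fun j _ => ?_
    by_cases hP : P t i j = 0
    · simp [hP]
    · simp [ih (hclosed t i j hi hP)]

theorem exists_polarizesWithTail {γ : ℝ} (hγ : 0 < γ) (habs : ∀ t i, ∑ j, |P t i j| = 1)
    (hdiag : ∀ t i, 0 < P t i i) (hlow : ∀ t i j, P t i j ≠ 0 → γ ≤ |P t i j|)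
    (hclosed : ∀ t i j, Root i → P t i j ≠ 0 → Root j)
    (hbal : ∀ t i j, Root i → Root j → i ≠ j → P t i j ≠ 0 → (f i = f j ↔ 0 < P t i j))
    {ts : ℕ → ℕ} {B : ℕ} (hmono : StrictMono ts) (hbdd : ∀ k, ts (k + 1) - ts k ≤ B)
    (hroots : ∀ k v, Root v → ∀ w, Relation.ReflTransGen
      (fun j i : Fin N => ∃ s, ts k ≤ s ∧ s < ts (k + 1) ∧ i ≠ j ∧ P s i j ≠ 0) v w)
    {r : Fin N} (hr : Root r) (x0 : Fin N → ℝ) : ∃ C, PolarizesWithTail P Root f x0 C := by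
  classical
  have hA := map_abs_mem_rowStochastic habs
  have hτ : StrictMono fun k => ts (k * N) :=
    hmono.comp (strictMono_mul_right_of_pos (Fin.pos r))
  have hmix : ∀ r', Root r' → ∀ k i, (γ ^ B) ^ N ≤ leftProd (fun t => (P t).map abs)
      (ts (k * N)) (ts ((k + 1) * N) - ts (k * N)) i r' := fun r' hr' =>
    pow_le_leftProd_map_abs hγ habs hdiag hlow hmono.monotone hbdd (hroots · r' hr')
  have hδ : 0 < (γ ^ B) ^ N := by positivity
  set R : Finset (Fin N) := {i | Root i}
  have hmemR : ∀ i, i ∈ R ↔ Root i := by simp [R]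
  have hR : IsClosedUnder (fun t => (P t).map abs) R := fun t i hi j hP => by
    rw [hmemR] at hi ⊢
    exact hclosed t i j hi fun h => hP (by simp [h])
  obtain ⟨C, hC⟩ := hR.exists_tendsto hA ⟨r, (hmemR r).2 hr⟩
    (y := fun t i => boolSign f i * traj P x0 t i)
    (fun t i hi => boolSign_mul_traj_succ hdiag hclosed hbal x0 t ((hmemR i).1 hi))
    hτ hδ fun k i _ r' hr' => hmix r' ((hmemR r').1 hr') k i
  refine ⟨C, fun i hi => ?_, fun i _ => ?_⟩
  · have hCi := (hC i ((hmemR i).2 hi)).const_mul (boolSign f i)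
    simp only [← mul_assoc, boolSign_mul_self, one_mul] at hCi
    rwa [boolSign_mul_eq_ite] at hCi
  · have hCr := (hC r ((hmemR r).2 hr)).abs
    simp only [abs_mul, abs_boolSign, one_mul] at hCr
    exact limsup_le_of_mixing hA (z := fun t i => |traj P x0 t i|) (fun _ _ => abs_nonneg _)
      (fun t i => abs_mulVec_apply_le _ _ i) hτ hδ (hmix r hr) hCr i

lemma ae_exists_polarizesWithTail_ne_zero
    (hpol : ∀ x0, ∃ C, PolarizesWithTail P Root f x0 C) {r : Fin N} (hr : Root r)
    (hfr : f r = true) (hone : ∀ t, traj P (boolSign f) t r = 1) :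
    ∀ᵐ x0 : Fin N → ℝ ∂volume, ∃ C, C ≠ 0 ∧ PolarizesWithTail P Root f x0 C := by
  have hlim : ∀ x0 C, PolarizesWithTail P Root f x0 C →
      Tendsto (fun t => leftProd P 0 t r ⬝ᵥ x0) atTop (nhds C) := fun x0 C h => by
    have h' := h.1 r hr
    simp only [hfr, if_true, traj_eq_leftProd_mulVec] at h'
    exact h'
  obtain ⟨v, hv⟩ := exists_tendsto_dotProduct fun x0 => (hpol x0).imp (hlim x0)
  have hv1 : v ⬝ᵥ boolSign f = 1 := by
    have hconst : ∀ t, leftProd P 0 t r ⬝ᵥ boolSign f = 1 := fun t => by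
      rw [← hone t, traj_eq_leftProd_mulVec]
      rfl
    exact tendsto_nhds_unique (hv _) (by simp only [hconst, tendsto_const_nhds])
  have hL : dotProductBilin ℝ ℝ v ≠ 0 := fun h => by
    simpa [hv1] using LinearMap.congr_fun h (boolSign f)
  filter_upwards [ae_apply_ne_zero volume hL] with x0 hx0
  obtain ⟨C, hC⟩ := hpol x0
  exact ⟨C, tendsto_nhds_unique (hv x0) (hlim x0 C hC) ▸ hx0, hC⟩

end SignedNetwork

theorem stmt14_general {N : ℕ} (P : ℕ → Matrix (Fin N) (Fin N) ℝ) (γ : ℝ)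
    (hγ : 0 < γ ∧ γ < 1)
    (habs : ∀ t i, ∑ j, |P t i j| = 1) (hdiag : ∀ t i, 0 < P t i i)
    (hlow : ∀ t i j, P t i j ≠ 0 → γ ≤ |P t i j|)
    -- V^s: the root vertex set of the union of all the graphs over [0,∞)
    (Root : Fin N → Prop)
    (hRoot : ∀ v, Root v ↔ ∀ w, Relation.ReflTransGen
      (fun j i : Fin N => i ≠ j ∧ ∃ t, P t i j ≠ 0) v w)
    -- (i) bipartition of V^s into two nonempty subsets, valid for every t
    (f : Fin N → Bool)
    (hfne : (∃ i, Root i ∧ f i = true) ∧ (∃ i, Root i ∧ f i = false))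
    (hbal : ∀ t i j, Root i → Root j → i ≠ j → P t i j ≠ 0 →
      (f i = f j ↔ 0 < P t i j))
    -- (ii) uniformly bounded intervals over which the union graph contains a
    -- spanning tree whose root vertex set is exactly V^s
    (ts : ℕ → ℕ) (B : ℕ) (hmono : ∀ k, ts k < ts (k + 1))
    (hbdd : ∀ k, ts (k + 1) - ts k ≤ B)
    (hroots : ∀ k v, (∀ w, Relation.ReflTransGen
        (fun j i : Fin N => ∃ s, ts k ≤ s ∧ s < ts (k + 1) ∧ i ≠ j ∧ P s i j ≠ 0) v w)
      ↔ Root v) :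
    (∀ x0 : Fin N → ℝ, ∃ C : ℝ, PolarizesWithTail P Root f x0 C) ∧
    (∀ᵐ x0 : Fin N → ℝ ∂volume, ∃ C : ℝ, C ≠ 0 ∧ PolarizesWithTail P Root f x0 C) := by
  obtain ⟨⟨r, hr, hfr⟩, -⟩ := hfne
  have hclosed : ∀ t i j, Root i → P t i j ≠ 0 → Root j :=
    fun _ _ _ hi hP => root_of_ne_zero hRoot hi hP
  have hpol : ∀ x0, ∃ C, PolarizesWithTail P Root f x0 C :=
    exists_polarizesWithTail hγ.1 habs hdiag hlow hclosed hbal (strictMono_nat_of_lt_succ hmono)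
      hbdd (fun k v hv => (hroots k v).2 hv) hr
  refine ⟨hpol, ae_exists_polarizesWithTail_ne_zero hpol hr hfr fun t => ?_⟩
  simpa [boolSign, hfr] using boolSign_mul_traj_boolSign habs hdiag hclosed hbal t hr

theorem stmt14 {N : ℕ} (P : ℕ → Matrix (Fin N) (Fin N) ℝ) (γ : ℝ)
    (hγ : 0 < γ ∧ γ < 1)
    (habs : ∀ t i, ∑ j, |P t i j| = 1) (hdiag : ∀ t i, 0 < P t i i)
    (hlow : ∀ t i j, P t i j ≠ 0 → γ ≤ |P t i j|)
    -- V^s: the root vertex set of the union of all the graphs over [0,∞)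
    (Root : Fin N → Prop)
    (hRoot : ∀ v, Root v ↔ ∀ w, Relation.ReflTransGen
      (fun j i : Fin N => i ≠ j ∧ ∃ t, P t i j ≠ 0) v w)
    -- (i) bipartition of V^s into two nonempty subsets, valid for every t
    (f : Fin N → Bool)
    (hfne : (∃ i, Root i ∧ f i = true) ∧ (∃ i, Root i ∧ f i = false))
    (hbal : ∀ t i j, Root i → Root j → i ≠ j → P t i j ≠ 0 →
      (f i = f j ↔ 0 < P t i j))
    -- (ii) uniformly bounded intervals over which the union graph contains a
    -- spanning tree whose root vertex set is exactly V^s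
    (ts : ℕ → ℕ) (B : ℕ) (hts0 : ts 0 = 0) (hmono : ∀ k, ts k < ts (k + 1))
    (hbdd : ∀ k, ts (k + 1) - ts k ≤ B)
    (hroots : ∀ k v, (∀ w, Relation.ReflTransGen
        (fun j i : Fin N => ∃ s, ts k ≤ s ∧ s < ts (k + 1) ∧ i ≠ j ∧ P s i j ≠ 0) v w)
      ↔ Root v) :
    (∀ x0 : Fin N → ℝ, ∃ C : ℝ, PolarizesWithTail P Root f x0 C) ∧
    (∀ᵐ x0 : Fin N → ℝ ∂volume, ∃ C : ℝ, C ≠ 0 ∧ PolarizesWithTail P Root f x0 C) :=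
  stmt14_general P γ hγ habs hdiag hlow Root hRoot f hfne hbal ts B hmono hbdd hroots
end
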